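/- arXiv:2506.03342 — 9 statements merged into one kernel-verified Lean document; each statement's English description precedes it below -/
import Mathlib

section
/- Let V be a finite-dimensional linear subspace of C¹(ℝ₊, ℝ). Then V is derivative invariant (i.e. f ∈ V implies that f is differentiable with f′ ∈ V) if and only if there exist d ∈ ℕ, a matrix A ∈ ℝ^{d×d} and a vector b₀ ∈ ℝ^d such that, setting b(x) := exp(xA)·b₀ for x ≥ 0, the d coordinate functions x ↦ b(x)_k (k = 1,…,d) form a basis of V. -/
/-!
STATEMENT 0: A finite-dimensional linear subspace `V` of `C¹(ℝ₊, ℝ)` is derivative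
invariant (the derivative of every element of `V`, taken within `ℝ₊ = [0,∞)`, again
lies in `V`) if and only if there are `d ∈ ℕ`, a matrix `A ∈ ℝ^{d×d}` and a vector
`b₀ ∈ ℝ^d` such that the coordinate functions of `b(x) := exp (x A) · b₀` form a
basis of `V`.

Elements of `C¹(ℝ₊, ℝ)` are modelled as functions `ℝ → ℝ` that are continuously
differentiable on `Set.Ici 0`; all statements (derivatives, equality of functions)
are interpreted on `Set.Ici 0`, since only the values on `ℝ₊` are relevant.
-/

section ExpHelpersDI
open NormedSpace Set

attribute [local instance] Matrix.linftyOpNormedAddCommGroup Matrix.linftyOpNormedRing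
  Matrix.linftyOpNormedAlgebra

variable {d : ℕ}

/-- `M ↦ M.mulVec b₀` as a continuous linear map. -/
noncomputable def mulVecConstCLM_DI (b₀ : Fin d → ℝ) :
    Matrix (Fin d) (Fin d) ℝ →L[ℝ] (Fin d → ℝ) :=
  LinearMap.toContinuousLinearMap
    { toFun := fun M => M.mulVec b₀
      map_add' := fun M N => Matrix.add_mulVec M N b₀
      map_smul' := fun c M => Matrix.smul_mulVec c M b₀ }

@[simp] lemma mulVecConstCLM_DI_apply (b₀ : Fin d → ℝ) (M : Matrix (Fin d) (Fin d) ℝ) :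
    mulVecConstCLM_DI b₀ M = M.mulVec b₀ := rfl

/-- `M ↦ (v ↦ M.mulVec v)` as a CLM into CLMs. -/
noncomputable def mulVecCLM_DI (d : ℕ) :
    Matrix (Fin d) (Fin d) ℝ →L[ℝ] ((Fin d → ℝ) →L[ℝ] (Fin d → ℝ)) :=
  LinearMap.toContinuousLinearMap
    { toFun := fun M => LinearMap.toContinuousLinearMap M.mulVecLin
      map_add' := fun M N => by ext v i; simp [Matrix.add_mulVec]
      map_smul' := fun c M => by ext v i; simp [Matrix.smul_mulVec] }

@[simp] lemma mulVecCLM_DI_apply (M : Matrix (Fin d) (Fin d) ℝ) (v : Fin d → ℝ) :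
    mulVecCLM_DI d M v = M.mulVec v := rfl

/-- Derivative of `t ↦ exp(tA) b₀`. -/
theorem hasDerivAt_exp_mulVec_DI (A : Matrix (Fin d) (Fin d) ℝ) (b₀ : Fin d → ℝ) (x : ℝ) :
    HasDerivAt (fun t : ℝ => (NormedSpace.exp (t • A)).mulVec b₀)
      (A.mulVec ((NormedSpace.exp (x • A)).mulVec b₀)) x := by
  have h := hasDerivAt_exp_smul_const' (𝕂 := ℝ) A x
  have h2 := (mulVecConstCLM_DI b₀).hasFDerivAt.comp_hasDerivAt x h
  simp only [Matrix.mulVec_mulVec]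
  exact h2

/-- Uniqueness for the linear ODE `b' = A b` on `[0, ∞)`. -/
theorem ode_unique_DI (A : Matrix (Fin d) (Fin d) ℝ) (b : ℝ → Fin d → ℝ)
    (hb : ∀ x ∈ Set.Ici (0:ℝ), HasDerivWithinAt b (A.mulVec (b x)) (Set.Ici 0) x) :
    ∀ x ∈ Set.Ici (0:ℝ), b x = (NormedSpace.exp (x • A)).mulVec (b 0) := by
  set F : ℝ → Fin d → ℝ := fun x => (exp ((-x) • A)).mulVec (b x) with hF
  have hcomm : ∀ x : ℝ, Commute A (exp ((-x) • A)) :=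
    fun x => ((Commute.refl A).smul_right (-x)).exp_right
  have hc : ∀ x : ℝ, HasDerivAt (fun t => mulVecCLM_DI d (exp ((-t) • A)))
      (mulVecCLM_DI d (-(A * exp ((-x) • A)))) x := by
    intro x
    have h1 : HasDerivAt (fun u : ℝ => exp (u • A)) (A * exp ((-x) • A)) (-x) :=
      hasDerivAt_exp_smul_const' (𝕂 := ℝ) A (-x)
    have h2 : HasDerivAt (fun t : ℝ => exp ((-t) • A))
        ((-1 : ℝ) • (A * exp ((-x) • A))) x :=
      h1.scomp x (hasDerivAt_neg x)
    have h3 := (mulVecCLM_DI d).hasFDerivAt.comp_hasDerivAt x h2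
    exact h3.congr_deriv (by rw [neg_one_smul]; rfl)
  have hderiv : ∀ x ∈ Set.Ici (0:ℝ), HasDerivWithinAt F 0 (Set.Ici 0) x := by
    intro x hx
    have := ((hc x).hasDerivWithinAt).clm_apply (hb x hx)
    have heq : mulVecCLM_DI d (-(A * exp ((-x) • A))) (b x)
        + mulVecCLM_DI d (exp ((-x) • A)) (A.mulVec (b x)) = 0 := by
      simp only [mulVecCLM_DI_apply, Matrix.neg_mulVec, Matrix.mulVec_mulVec]
      rw [← (hcomm x).eq]
      simp [Matrix.mulVec_mulVec]
    rwa [heq] at this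
  have hconst : ∀ x ∈ Set.Ici (0:ℝ), F x = F 0 := by
    intro x hx
    refine (convex_Ici (0:ℝ)).is_const_of_fderivWithin_eq_zero
      (fun y hy => (hderiv y hy).differentiableWithinAt) ?_ hx (self_mem_Ici)
    intro y hy
    have := (hderiv y hy).hasFDerivWithinAt.fderivWithin ((uniqueDiffOn_Ici 0) y hy)
    rw [this]; ext z; simp
  intro x hx
  have hF0 : F 0 = b 0 := by simp [hF]
  have hx' : (exp (x • A)).mulVec (F x) = b x := by
    rw [hF]
    simp only [Matrix.mulVec_mulVec]
    rw [← Matrix.exp_add_of_commute _ _ ((Commute.refl A).smul_left x |>.smul_right (-x))]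
    simp
  rw [← hx', hconst x hx, hF0]

end ExpHelpersDI

open NormedSpace Set

theorem derivative_invariant_iff_quasi_exponential_basis
    (V : Submodule ℝ (ℝ → ℝ))
    (hC1 : ∀ f ∈ V, ContDiffOn ℝ 1 f (Set.Ici (0 : ℝ)))
    (hfd : FiniteDimensional ℝ V) :
    (∀ f ∈ V, ∃ g ∈ V, Set.EqOn (derivWithin f (Set.Ici (0 : ℝ))) g (Set.Ici (0 : ℝ)))
      ↔
    ∃ (d : ℕ) (A : Matrix (Fin d) (Fin d) ℝ) (b₀ : Fin d → ℝ)
      (bas : Module.Basis (Fin d) ℝ V),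
      ∀ k : Fin d, ∀ x ∈ Set.Ici (0 : ℝ),
        (bas k : ℝ → ℝ) x = (NormedSpace.exp (x • A)).mulVec b₀ k := by
  classical
  constructor
  · intro h
    set d := Module.finrank ℝ V with hd
    let e : Module.Basis (Fin d) ℝ V := Module.finBasis ℝ V
    choose g hgV hg using fun i : Fin d => h (e i : ℝ → ℝ) (e i).2
    set A : Matrix (Fin d) (Fin d) ℝ := fun i j => e.repr ⟨g i, hgV i⟩ j with hA
    set b : ℝ → Fin d → ℝ := fun x k => (e k : ℝ → ℝ) x with hbdef
    have hgi : ∀ i x, g i x = (A.mulVec (b x)) i := by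
      intro i x
      have := congrArg (fun v : V => (v : ℝ → ℝ) x) (e.sum_repr ⟨g i, hgV i⟩)
      simp only [AddSubmonoidClass.coe_finset_sum, SetLike.val_smul, Finset.sum_apply,
        Pi.smul_apply, smul_eq_mul] at this
      rw [← this]
      simp [Matrix.mulVec, dotProduct, hA, hbdef]
    have hb : ∀ x ∈ Set.Ici (0:ℝ), HasDerivWithinAt b (A.mulVec (b x)) (Set.Ici 0) x := by
      intro x hx
      rw [hasDerivWithinAt_pi]
      intro i
      have hdiff := ((hC1 _ (e i).2).differentiableOn one_ne_zero) x hx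
      have h1 : HasDerivWithinAt (e i : ℝ → ℝ)
          (derivWithin (e i : ℝ → ℝ) (Set.Ici 0) x) (Set.Ici 0) x := hdiff.hasDerivWithinAt
      have h2 : derivWithin (e i : ℝ → ℝ) (Set.Ici 0) x = (A.mulVec (b x)) i := by
        rw [hg i hx, hgi]
      rw [h2] at h1
      exact h1
    have key := ode_unique_DI A b hb
    exact ⟨d, A, b 0, e, fun k x hx => by
      rw [show ((e k : ℝ → ℝ) x) = b x k from rfl, key x hx]⟩
  · rintro ⟨d, A, b₀, bas, hbas⟩ f hf
    set c : Fin d → ℝ := fun k => bas.repr ⟨f, hf⟩ k with hc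
    set gV : V := ∑ k, c k • ∑ j, A k j • bas j with hgV
    refine ⟨(gV : ℝ → ℝ), gV.2, ?_⟩
    have hfe : ∀ x, f x = ∑ k, c k * (bas k : ℝ → ℝ) x := by
      intro x
      have := congrArg (fun v : V => (v : ℝ → ℝ) x) (bas.sum_repr ⟨f, hf⟩)
      simp only [AddSubmonoidClass.coe_finset_sum, SetLike.val_smul, Finset.sum_apply,
        Pi.smul_apply, smul_eq_mul] at this
      exact this.symm
    have hgVx : ∀ x, (gV : ℝ → ℝ) x = ∑ k, c k * ∑ j, A k j * (bas j : ℝ → ℝ) x := by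
      intro x
      simp [hgV, AddSubmonoidClass.coe_finset_sum, Finset.sum_apply, Finset.mul_sum]
    intro x hx
    have hbk : ∀ k : Fin d, HasDerivWithinAt (bas k : ℝ → ℝ)
        (∑ j, A k j * (bas j : ℝ → ℝ) x) (Set.Ici 0) x := by
      intro k
      have h1 : HasDerivAt (fun t : ℝ => (exp (t • A)).mulVec b₀ k)
          ((A.mulVec ((exp (x • A)).mulVec b₀)) k) x :=
        hasDerivAt_pi.1 (hasDerivAt_exp_mulVec_DI A b₀ x) k
      have h2 : HasDerivWithinAt (bas k : ℝ → ℝ)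
          ((A.mulVec ((exp (x • A)).mulVec b₀)) k) (Set.Ici 0) x :=
        h1.hasDerivWithinAt.congr (fun y hy => hbas k y hy) (hbas k x hx)
      have h3 : (A.mulVec ((exp (x • A)).mulVec b₀)) k
          = ∑ j, A k j * (bas j : ℝ → ℝ) x := by
        simp only [Matrix.mulVec, dotProduct]
        exact Finset.sum_congr rfl fun j _ => by rw [hbas j x hx]; rfl
      rwa [h3] at h2
    have hsum : HasDerivWithinAt (fun y => ∑ k, c k * (bas k : ℝ → ℝ) y)
        (∑ k, c k * ∑ j, A k j * (bas j : ℝ → ℝ) x) (Set.Ici 0) x :=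
      HasDerivWithinAt.fun_sum fun k _ => (hbk k).const_mul (c k)
    have hfderiv : HasDerivWithinAt f
        (∑ k, c k * ∑ j, A k j * (bas j : ℝ → ℝ) x) (Set.Ici 0) x :=
      hsum.congr (fun y _ => hfe y) (hfe x)
    rw [hfderiv.derivWithin ((uniqueDiffOn_Ici 0) x hx), hgVx]
end

section
/- Let h : ℝ → ℝ be a real-analytic function whose Taylor series at 0 has infinite radius of convergence and whose derivatives satisfy h^{(k)}(0) ≥ 0 for all k ∈ ℕ₀. Let a, c ∈ ℝ with a ≠ 0, and define k(x,y) := h((ax − c)(ay − c)). Then k is a symmetric positive semidefinite kernel function on ℝ: for every n ∈ ℕ and every choice of points x₁,…,xₙ ∈ ℝ the matrix (k(xᵢ,xⱼ))_{i,j=1}^{n} is positive semidefinite. -/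
/-!
STATEMENT 3: Let `h : ℝ → ℝ` be real analytic with Taylor series at `0` of
infinite radius of convergence (for every `x`, the Taylor series of `h` at `0`
converges to `h x`) and with `h⁽ᵏ⁾(0) ≥ 0` for all `k`.  For `a ≠ 0` and `c ∈ ℝ`
define `k (x, y) := h ((a x − c) (a y − c))`.  Then `k` is a symmetric positive
semidefinite kernel function on `ℝ`: for every `n` and all points
`x₁, …, xₙ ∈ ℝ` the matrix `(k (xᵢ, xⱼ))ᵢⱼ` is positive semidefinite.
-/

theorem kernel_of_analytic_nonneg_taylor_coeffs
    (h : ℝ → ℝ)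
    (hTaylor : ∀ x : ℝ,
      HasSum (fun k : ℕ => (iteratedDeriv k h 0 / (k.factorial : ℝ)) * x ^ k) (h x))
    (hpos : ∀ k : ℕ, 0 ≤ iteratedDeriv k h 0)
    (a c : ℝ) (ha : a ≠ 0) :
    (∀ x y : ℝ, h ((a * x - c) * (a * y - c)) = h ((a * y - c) * (a * x - c))) ∧
    (∀ (n : ℕ) (x : Fin n → ℝ),
      (Matrix.of fun i j => h ((a * x i - c) * (a * x j - c))).PosSemidef) := by
  set cf : ℕ → ℝ := fun k => iteratedDeriv k h 0 / (k.factorial : ℝ) with hcf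
  have hcfpos : ∀ k, 0 ≤ cf k := fun k =>
    div_nonneg (hpos k) (by positivity)
  refine ⟨fun x y => by ring_nf, ?_⟩
  intro n x
  rw [Matrix.posSemidef_iff_dotProduct_mulVec]
  constructor
  · ext i j
    simp [Matrix.IsHermitian, Matrix.conjTranspose]
    ring_nf
  · intro z
    set u : Fin n → ℝ := fun i => a * x i - c with hu
    have key : HasSum (fun k : ℕ => cf k * (∑ i, z i * u i ^ k) ^ 2)
        (dotProduct (star z) ((Matrix.of fun i j => h ((a * x i - c) * (a * x j - c))).mulVec z)) := by
      have h2 : HasSum (fun k : ℕ => ∑ i, ∑ j, z i * z j * (cf k * (u i * u j) ^ k))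
          (∑ i, ∑ j, z i * z j * h (u i * u j)) := by
        apply hasSum_sum
        intro i _
        apply hasSum_sum
        intro j _
        exact (hTaylor (u i * u j)).mul_left (z i * z j)
      have e1 : (fun k : ℕ => ∑ i, ∑ j, z i * z j * (cf k * (u i * u j) ^ k))
          = fun k : ℕ => cf k * (∑ i, z i * u i ^ k) ^ 2 := by
        funext k
        rw [sq, Finset.sum_mul_sum, Finset.mul_sum]
        apply Finset.sum_congr rfl
        intro i _
        rw [Finset.mul_sum]
        apply Finset.sum_congr rfl
        intro j _
        rw [mul_pow]; ring
      have e2 : (∑ i, ∑ j, z i * z j * h (u i * u j))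
          = dotProduct (star z) ((Matrix.of fun i j => h ((a * x i - c) * (a * x j - c))).mulVec z) := by
        simp [dotProduct, Matrix.mulVec, Finset.mul_sum, hu]
        apply Finset.sum_congr rfl; intro i _
        apply Finset.sum_congr rfl; intro j _
        ring
      rw [e1, e2] at h2
      exact h2
    have : (0:ℝ) ≤ dotProduct (star z) ((Matrix.of fun i j => h ((a * x i - c) * (a * x j - c))).mulVec z) :=
      key.nonneg (fun k => mul_nonneg (hcfpos k) (sq_nonneg _))
    exact this
end

section
/- Let p(t) = a_d t^d + … + a₁ t + a₀ be a real polynomial with a_k ≥ 0 for k = 0,…,d, let α, β ∈ ℝ with α ≥ 0 and β > 0, and define k(x,y) := p((√β·x − α/√β)(√β·y − α/√β))·e^{βxy − α(x+y)} for x, y ∈ ℝ₊. Then: (i) k is a symmetric positive semidefinite kernel function on ℝ₊, i.e. for every finite collection of points x₁,…,xₙ ∈ ℝ₊ the matrix (k(xᵢ,xⱼ))ᵢⱼ is positive semidefinite; and (ii) k is fully consistent: for every choice of points y₁,…,y_N ∈ ℝ₊ there exists a finite-dimensional derivative-invariant subspace V ⊆ C¹(ℝ₊,ℝ) containing the sections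 k(·,y₁),…,k(·,y_N). -/
/-!
STATEMENT 4: Let `p` be a real polynomial with nonnegative coefficients, let
`α ≥ 0`, `β > 0`, and define
`k (x, y) := p ((√β x − α/√β) (√β y − α/√β)) · e^{β x y − α (x + y)}` on `ℝ₊`.
Then (i) `k` is a symmetric positive semidefinite kernel function on `ℝ₊`, and
(ii) `k` is fully consistent: for every choice of points `y₁, …, y_N ∈ ℝ₊` there
is a finite-dimensional derivative-invariant subspace `V ⊆ C¹(ℝ₊, ℝ)` containing
the sections `k (·, yᵢ)`.

Functions on `ℝ₊` are modelled as functions `ℝ → ℝ`, with all conditions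
interpreted on `Set.Ici 0`.
-/

/-- `V` is a finite-dimensional derivative-invariant subspace of `C¹(ℝ₊,ℝ)`
containing (as functions on `ℝ₊`) the sections `k (y i) ·`. -/
def IsConsistentSpaceFor (k : ℝ → ℝ → ℝ) {N : ℕ} (y : Fin N → ℝ)
    (V : Submodule ℝ (ℝ → ℝ)) : Prop :=
  FiniteDimensional ℝ V ∧
  (∀ f ∈ V, ContDiffOn ℝ 1 f (Set.Ici (0 : ℝ))) ∧
  (∀ f ∈ V, ∃ g ∈ V,
      Set.EqOn (derivWithin f (Set.Ici (0 : ℝ))) g (Set.Ici (0 : ℝ))) ∧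
  (∀ i : Fin N, ∃ g ∈ V, Set.EqOn (fun x => k (y i) x) g (Set.Ici (0 : ℝ)))

/-- A kernel `k` on `ℝ₊` is fully consistent. -/
def FullyConsistent (k : ℝ → ℝ → ℝ) : Prop :=
  ∀ (N : ℕ) (y : Fin N → ℝ), (∀ i, 0 ≤ y i) →
    ∃ V : Submodule ℝ (ℝ → ℝ), IsConsistentSpaceFor k y V

/-- The polynomial-exponential kernel
`k (x, y) = p ((√β x − α/√β)(√β y − α/√β)) e^{β x y − α(x+y)}`. -/
noncomputable def polyExpKernel (p : Polynomial ℝ) (α β : ℝ) (x y : ℝ) : ℝ :=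
  p.eval ((Real.sqrt β * x - α / Real.sqrt β) * (Real.sqrt β * y - α / Real.sqrt β))
    * Real.exp (β * x * y - α * (x + y))

/-- The building blocks `t ↦ (s t - a)^k e^{c t}`. -/
noncomputable def expMonomial (s a c : ℝ) (k : ℕ) : ℝ → ℝ :=
  fun t => (s * t - a) ^ k * Real.exp (c * t)

lemma expMonomial_contDiff (s a c : ℝ) (k : ℕ) : ContDiff ℝ 1 (expMonomial s a c k) := by
  have h1 : ContDiff ℝ 1 (fun t : ℝ => (s * t - a) ^ k) :=
    ((contDiff_const.mul contDiff_id).sub contDiff_const).pow k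
  have h2 : ContDiff ℝ 1 (fun t : ℝ => Real.exp (c * t)) :=
    (Real.contDiff_exp.of_le le_top).comp (contDiff_const.mul contDiff_id)
  exact h1.mul h2

lemma expMonomial_hasDerivAt (s a c : ℝ) (k : ℕ) (t : ℝ) :
    HasDerivAt (expMonomial s a c k)
      (((k : ℝ) * s) * expMonomial s a c (k - 1) t + c * expMonomial s a c k t) t := by
  have h1 : HasDerivAt (fun u : ℝ => s * u - a) s t := by
    simpa using ((hasDerivAt_id t).const_mul s).sub_const a
  have h2 : HasDerivAt (fun u : ℝ => (s * u - a) ^ k)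
      ((k : ℝ) * (s * t - a) ^ (k - 1) * s) t := h1.pow k
  have h3 : HasDerivAt (fun u : ℝ => Real.exp (c * u)) (Real.exp (c * t) * c) t := by
    simpa using ((hasDerivAt_id t).const_mul c).exp
  have h4 := h2.mul h3
  have : ((k : ℝ) * (s * t - a) ^ (k - 1) * s) * Real.exp (c * t)
      + (s * t - a) ^ k * (Real.exp (c * t) * c)
      = ((k : ℝ) * s) * expMonomial s a c (k - 1) t + c * expMonomial s a c k t := by
    simp only [expMonomial]; ring
  exact (this ▸ h4 : _)

lemma expMonomial_deriv (s a c : ℝ) (k : ℕ) :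
    deriv (expMonomial s a c k)
      = ((k : ℝ) * s) • expMonomial s a c (k - 1) + c • expMonomial s a c k := by
  funext t
  simp only [Pi.add_apply, Pi.smul_apply, smul_eq_mul]
  exact (expMonomial_hasDerivAt s a c k t).deriv

/-- The key positivity estimate: the kernel `(u v)^k e^{u v}` is positive semidefinite. -/
lemma polyExp_aux_nonneg {n : ℕ} (w v : Fin n → ℝ) (k : ℕ) :
    0 ≤ ∑ i, ∑ j, v i * v j * ((w i * w j) ^ k * Real.exp (w i * w j)) := by
  have hexp : ∀ t : ℝ, Real.exp t = ∑' m : ℕ, t ^ m / m.factorial := by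
    intro t
    rw [Real.exp_eq_exp_ℝ, NormedSpace.exp_eq_tsum_div]
  set F : Fin n → Fin n → ℕ → ℝ :=
    fun i j m => (v i * w i ^ (k + m)) * (v j * w j ^ (k + m)) / m.factorial with hF
  have hsum : ∀ i j : Fin n, Summable (F i j) := by
    intro i j
    have h := (Real.summable_pow_div_factorial (w i * w j)).mul_left
      (v i * v j * (w i ^ k * w j ^ k))
    refine (h.congr fun m => ?_)
    simp only [hF]
    rw [pow_add, pow_add, mul_pow]
    ring
  have hterm : ∀ i j : Fin n,
      v i * v j * ((w i * w j) ^ k * Real.exp (w i * w j)) = ∑' m, F i j m := by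
    intro i j
    calc v i * v j * ((w i * w j) ^ k * Real.exp (w i * w j))
        = (v i * v j * (w i * w j) ^ k) * ∑' m : ℕ, (w i * w j) ^ m / m.factorial := by
          rw [hexp]; ring
      _ = ∑' m : ℕ, (v i * v j * (w i * w j) ^ k) * ((w i * w j) ^ m / m.factorial) :=
          tsum_mul_left.symm
      _ = ∑' m, F i j m := by
          refine tsum_congr fun m => ?_
          simp only [hF]
          rw [pow_add, pow_add, mul_pow]
          ring
  have hswap : ∑ i, ∑ j, v i * v j * ((w i * w j) ^ k * Real.exp (w i * w j))
      = ∑' m, ∑ i, ∑ j, F i j m := by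
    calc ∑ i, ∑ j, v i * v j * ((w i * w j) ^ k * Real.exp (w i * w j))
        = ∑ i, ∑ j, ∑' m, F i j m :=
          Finset.sum_congr rfl fun i _ => Finset.sum_congr rfl fun j _ => hterm i j
      _ = ∑ i, ∑' m, ∑ j, F i j m :=
          Finset.sum_congr rfl fun i _ => (Summable.tsum_finsetSum fun j _ => hsum i j).symm
      _ = ∑' m, ∑ i, ∑ j, F i j m :=
          (Summable.tsum_finsetSum fun i _ => summable_sum fun j _ => hsum i j).symm
  rw [hswap]
  refine tsum_nonneg fun m => ?_
  have hEq : ∑ i, ∑ j, F i j m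
      = (∑ i, v i * w i ^ (k + m)) ^ 2 / (m.factorial : ℝ) := by
    rw [sq, Finset.sum_mul_sum, Finset.sum_div]
    refine Finset.sum_congr rfl fun i _ => ?_
    rw [Finset.sum_div]
  rw [hEq]
  positivity

theorem polyExpKernel_posSemidef_and_fullyConsistent
    (p : Polynomial ℝ) (hp : ∀ k : ℕ, 0 ≤ p.coeff k)
    (α β : ℝ) (hα : 0 ≤ α) (hβ : 0 < β) :
    (∀ x ∈ Set.Ici (0 : ℝ), ∀ y ∈ Set.Ici (0 : ℝ),
        polyExpKernel p α β x y = polyExpKernel p α β y x) ∧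
    (∀ (n : ℕ) (x : Fin n → ℝ), (∀ i, 0 ≤ x i) →
        (Matrix.of fun i j => polyExpKernel p α β (x i) (x j)).PosSemidef) ∧
    FullyConsistent (polyExpKernel p α β) := by
  have hs0 : Real.sqrt β ≠ 0 := ne_of_gt (Real.sqrt_pos.mpr hβ)
  have hsq : Real.sqrt β * Real.sqrt β = β := Real.mul_self_sqrt hβ.le
  have hUU : ∀ a b : ℝ,
      (Real.sqrt β * a - α / Real.sqrt β) * (Real.sqrt β * b - α / Real.sqrt β)
        = β * a * b - α * (a + b) + α * α / β := by
    intro a b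
    set sb := Real.sqrt β with hsb
    rw [← hsq]
    field_simp
    ring
  have hker : ∀ a b : ℝ, polyExpKernel p α β a b
      = Polynomial.eval
          ((Real.sqrt β * a - α / Real.sqrt β) * (Real.sqrt β * b - α / Real.sqrt β)) p
        * Real.exp
          ((Real.sqrt β * a - α / Real.sqrt β) * (Real.sqrt β * b - α / Real.sqrt β))
        * Real.exp (-(α * α / β)) := by
    intro a b
    rw [polyExpKernel,
      show β * a * b - α * (a + b)
        = (Real.sqrt β * a - α / Real.sqrt β) * (Real.sqrt β * b - α / Real.sqrt β)
          + (-(α * α / β)) by rw [hUU]; ring,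
      Real.exp_add, ← mul_assoc]
  have hsymm : ∀ a b : ℝ, polyExpKernel p α β a b = polyExpKernel p α β b a := by
    intro a b
    unfold polyExpKernel
    rw [mul_comm (Real.sqrt β * a - α / Real.sqrt β),
      show β * a * b - α * (a + b) = β * b * a - α * (b + a) by ring]
  refine ⟨?_, ?_, ?_⟩
  · -- symmetry
    intro x _ y _
    exact hsymm x y
  · -- positive semidefiniteness
    intro n x _
    rw [Matrix.posSemidef_iff_dotProduct_mulVec]
    constructor
    · refine Matrix.IsHermitian.ext fun i j => ?_
      simp only [Matrix.of_apply, star_trivial]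
      exact hsymm (x j) (x i)
    · intro v
      have hform : dotProduct (star v)
          (Matrix.mulVec (Matrix.of fun i j => polyExpKernel p α β (x i) (x j)) v)
          = ∑ k ∈ Finset.range (p.natDegree + 1), (p.coeff k * Real.exp (-(α * α / β))) *
              ∑ i, ∑ j, v i * v j *
                (((Real.sqrt β * x i - α / Real.sqrt β) * (Real.sqrt β * x j - α / Real.sqrt β)) ^ k
                  * Real.exp
                    ((Real.sqrt β * x i - α / Real.sqrt β) * (Real.sqrt β * x j - α / Real.sqrt β))) := by
        simp only [dotProduct, Matrix.mulVec, Matrix.of_apply, Pi.star_apply,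
          star_trivial]
        calc ∑ i, v i * ∑ j, polyExpKernel p α β (x i) (x j) * v j
            = ∑ i, ∑ j, ∑ k ∈ Finset.range (p.natDegree + 1),
                (p.coeff k * Real.exp (-(α * α / β))) *
                (v i * v j *
                  (((Real.sqrt β * x i - α / Real.sqrt β) * (Real.sqrt β * x j - α / Real.sqrt β)) ^ k
                    * Real.exp
                      ((Real.sqrt β * x i - α / Real.sqrt β) * (Real.sqrt β * x j - α / Real.sqrt β)))) := by
              refine Finset.sum_congr rfl fun i _ => ?_
              rw [Finset.mul_sum]
              refine Finset.sum_congr rfl fun j _ => ?_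
              rw [hker, Polynomial.eval_eq_sum_range]
              rw [Finset.sum_mul, Finset.sum_mul, Finset.sum_mul, Finset.mul_sum]
              exact Finset.sum_congr rfl fun k _ => by ring
          _ = ∑ k ∈ Finset.range (p.natDegree + 1), ∑ i, ∑ j,
                (p.coeff k * Real.exp (-(α * α / β))) *
                (v i * v j *
                  (((Real.sqrt β * x i - α / Real.sqrt β) * (Real.sqrt β * x j - α / Real.sqrt β)) ^ k
                    * Real.exp
                      ((Real.sqrt β * x i - α / Real.sqrt β) * (Real.sqrt β * x j - α / Real.sqrt β)))) := by
              exact Eq.trans (Finset.sum_congr rfl fun i _ => Finset.sum_comm)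
                Finset.sum_comm
          _ = _ := by
              refine Finset.sum_congr rfl fun k _ => ?_
              rw [Finset.mul_sum]
              exact Finset.sum_congr rfl fun i _ => by rw [Finset.mul_sum]
      rw [hform]
      refine Finset.sum_nonneg fun k _ => mul_nonneg (mul_nonneg (hp k) ?_) ?_
      · exact (Real.exp_pos _).le
      · exact polyExp_aux_nonneg (fun i => Real.sqrt β * x i - α / Real.sqrt β) v k
  · -- full consistency
    intro N y hy
    set S : Set (ℝ → ℝ) := Set.range (fun q : Fin N × Fin (p.natDegree + 1) =>
      expMonomial (Real.sqrt β) (α / Real.sqrt β) (β * y q.1 - α) q.2) with hS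
    have hmemG : ∀ (i : Fin N) (k : ℕ), k < p.natDegree + 1 →
        expMonomial (Real.sqrt β) (α / Real.sqrt β) (β * y i - α) k ∈ Submodule.span ℝ S :=
      fun i k hk => Submodule.subset_span ⟨(i, ⟨k, hk⟩), rfl⟩
    have key : ∀ f ∈ Submodule.span ℝ S,
        ContDiff ℝ 1 f ∧ deriv f ∈ Submodule.span ℝ S := by
      intro f hf
      induction hf using Submodule.span_induction with
      | mem g hg =>
        obtain ⟨⟨i, k⟩, rfl⟩ := hg
        constructor
        · exact expMonomial_contDiff _ _ _ _
        · show deriv (expMonomial (Real.sqrt β) (α / Real.sqrt β) (β * y i - α) (k : ℕ))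
            ∈ Submodule.span ℝ S
          rw [expMonomial_deriv]
          exact Submodule.add_mem _
            (Submodule.smul_mem _ _ (hmemG i _ (lt_of_le_of_lt (Nat.sub_le _ _) k.isLt)))
            (Submodule.smul_mem _ _ (hmemG i _ k.isLt))
      | zero =>
        refine ⟨contDiff_const, ?_⟩
        have h0 : deriv (0 : ℝ → ℝ) = 0 := by
          funext t
          show deriv (fun _ : ℝ => (0 : ℝ)) t = 0
          exact deriv_const t 0
        rw [h0]
        exact Submodule.zero_mem _
      | add f g hf hg ihf ihg =>
        refine ⟨ihf.1.add ihg.1, ?_⟩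
        have hadd : deriv (f + g) = deriv f + deriv g := by
          funext t
          have hfg : f + g = fun u => f u + g u := rfl
          rw [hfg, deriv_fun_add (ihf.1.differentiable one_ne_zero t) (ihg.1.differentiable one_ne_zero t)]
          rfl
        rw [hadd]
        exact Submodule.add_mem _ ihf.2 ihg.2
      | smul a f hf ihf =>
        refine ⟨ihf.1.const_smul a, ?_⟩
        have hsmul : deriv (a • f) = a • deriv f := by
          funext t
          have haf : a • f = fun u => a * f u := rfl
          rw [haf, deriv_const_mul a (ihf.1.differentiable one_ne_zero t)]
          rfl
        rw [hsmul]
        exact Submodule.smul_mem _ _ ihf.2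
    refine ⟨Submodule.span ℝ S, ?_, ?_, ?_, ?_⟩
    · exact FiniteDimensional.span_of_finite ℝ (Set.finite_range _)
    · exact fun f hf => ((key f hf).1).contDiffOn
    · intro f hf
      refine ⟨deriv f, (key f hf).2, fun t ht => ?_⟩
      exact ((key f hf).1.differentiable one_ne_zero t).derivWithin (uniqueDiffOn_Ici 0 t ht)
    · intro i
      refine ⟨∑ k ∈ Finset.range (p.natDegree + 1),
        (p.coeff k * (Real.sqrt β * y i - α / Real.sqrt β) ^ k * Real.exp (-(α * y i))) •
          expMonomial (Real.sqrt β) (α / Real.sqrt β) (β * y i - α) k,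
        Submodule.sum_mem _ fun k hk =>
          Submodule.smul_mem _ _ (hmemG i k (Finset.mem_range.mp hk)), fun t _ => ?_⟩
      show polyExpKernel p α β (y i) t = _
      rw [polyExpKernel, Polynomial.eval_eq_sum_range,
        show β * y i * t - α * (y i + t) = (β * y i - α) * t + (-(α * y i)) by ring,
        Real.exp_add, Finset.sum_mul]
      simp only [Finset.sum_apply, Pi.smul_apply, smul_eq_mul, expMonomial]
      refine Finset.sum_congr rfl fun k _ => ?_
      rw [mul_pow]
      ring
end

section
/- For i = 1,…,m let p_i be a real polynomial with nonnegative coefficients, let α_i, β_i ∈ ℝ with α_i ≥ 0 and β_i > 0, and set k_i(x,y) := p_i((√β_i·x − α_i/√β_i)(√β_i·y − α_i/√β_i))·e^{β_i xy − α_i(x+y)} for x, y ∈ ℝ₊. Then the sum k(x,y) := Σ_{i=1}^{m} k_i(x,y) is a symmetric positive semidefinite kernel function on ℝ₊ and is fully consistent: for every choice of points y₁,…,y_N ∈ ℝ₊ there exists a finite-dimensional derivative-invariant subspace V ⊆ C¹(ℝ₊,ℝ) containing the sections k(·,y₁),…,k(·,y_N). -/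
lemma expGram_nonneg (n : ℕ) (a w : Fin n → ℝ) :
    0 ≤ ∑ j, ∑ l, (w j * w l) * Real.exp (a j * a l) := by
  have hsum : ∀ j l : Fin n, Summable (fun k : ℕ => (w j * w l) * ((a j * a l) ^ k / k.factorial)) :=
    fun j l => (Real.summable_pow_div_factorial (a j * a l)).mul_left _
  have hexp : ∀ j l : Fin n, (w j * w l) * Real.exp (a j * a l)
      = ∑' k : ℕ, (w j * w l) * ((a j * a l) ^ k / k.factorial) := by
    intro j l
    rw [Real.exp_eq_exp_ℝ, NormedSpace.exp_eq_tsum_div, tsum_mul_left]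
  calc (0:ℝ) ≤ ∑' k : ℕ, (∑ j, w j * a j ^ k) ^ 2 / k.factorial := by
        refine tsum_nonneg fun k => div_nonneg (sq_nonneg _) (Nat.cast_nonneg _)
    _ = ∑' k : ℕ, ∑ j, ∑ l, (w j * w l) * ((a j * a l) ^ k / k.factorial) := by
        refine tsum_congr fun k => ?_
        rw [sq, Finset.sum_mul_sum, Finset.sum_div]
        refine Finset.sum_congr rfl fun j _ => ?_
        rw [Finset.sum_div]
        refine Finset.sum_congr rfl fun l _ => ?_
        ring
    _ = ∑ j, ∑ l, (w j * w l) * Real.exp (a j * a l) := by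
        rw [Summable.tsum_finsetSum (fun j _ => summable_sum fun l _ => hsum j l)]
        refine Finset.sum_congr rfl fun j _ => ?_
        rw [Summable.tsum_finsetSum (fun l _ => hsum j l)]
        exact Finset.sum_congr rfl fun l _ => (hexp j l).symm

lemma polyExpKernel_eq (p : Polynomial ℝ) (α β : ℝ) (hβ : 0 < β) (x y : ℝ) :
    polyExpKernel p α β x y
      = Real.exp (-(α^2/β)) *
        (p.eval ((Real.sqrt β * x - α / Real.sqrt β) * (Real.sqrt β * y - α / Real.sqrt β))
          * Real.exp ((Real.sqrt β * x - α / Real.sqrt β) * (Real.sqrt β * y - α / Real.sqrt β))) := by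
  have hb : Real.sqrt β * Real.sqrt β = β := Real.mul_self_sqrt hβ.le
  have hb0 : Real.sqrt β ≠ 0 := by positivity
  have harg : β * x * y - α * (x + y)
      = (Real.sqrt β * x - α / Real.sqrt β) * (Real.sqrt β * y - α / Real.sqrt β) - α^2/β := by
    field_simp
    rw [Real.sq_sqrt hβ.le]; ring
  rw [polyExpKernel, harg, Real.exp_sub, Real.exp_neg]
  ring

lemma quad_nonneg (p : Polynomial ℝ) (hp : ∀ k, 0 ≤ p.coeff k) (α β : ℝ)
    (hβ : 0 < β) (n : ℕ) (x v : Fin n → ℝ) :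
    0 ≤ ∑ j, ∑ l, v j * v l * polyExpKernel p α β (x j) (x l) := by
  set a : Fin n → ℝ := fun j => Real.sqrt β * x j - α / Real.sqrt β with ha
  have key : ∀ j l, v j * v l * polyExpKernel p α β (x j) (x l)
      = ∑ k ∈ Finset.range (p.natDegree + 1),
          Real.exp (-(α^2/β)) * p.coeff k *
            ((v j * a j ^ k * (v l * a l ^ k)) * Real.exp (a j * a l)) := by
    intro j l
    rw [polyExpKernel_eq p α β hβ, Polynomial.eval_eq_sum_range, Finset.sum_mul, Finset.mul_sum,
      Finset.mul_sum]
    refine Finset.sum_congr rfl fun k _ => ?_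
    rw [mul_pow]
    ring
  simp_rw [key]
  rw [show (∑ j, ∑ l, ∑ k ∈ Finset.range (p.natDegree + 1),
        Real.exp (-(α^2/β)) * p.coeff k *
          ((v j * a j ^ k * (v l * a l ^ k)) * Real.exp (a j * a l)))
      = ∑ k ∈ Finset.range (p.natDegree + 1), ∑ j, ∑ l,
        Real.exp (-(α^2/β)) * p.coeff k *
          ((v j * a j ^ k * (v l * a l ^ k)) * Real.exp (a j * a l)) from
    (Finset.sum_congr rfl fun j _ => Finset.sum_comm).trans Finset.sum_comm]
  refine Finset.sum_nonneg fun k _ => ?_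
  have h0 := expGram_nonneg n a (fun j => v j * a j ^ k)
  have heq : ∑ j, ∑ l, Real.exp (-(α^2/β)) * p.coeff k *
        ((v j * a j ^ k * (v l * a l ^ k)) * Real.exp (a j * a l))
      = Real.exp (-(α^2/β)) * p.coeff k *
        ∑ j, ∑ l, (v j * a j ^ k * (v l * a l ^ k)) * Real.exp (a j * a l) := by
    rw [Finset.mul_sum]
    exact Finset.sum_congr rfl fun j _ => by rw [Finset.mul_sum]
  rw [heq]
  exact mul_nonneg (mul_nonneg (Real.exp_pos _).le (hp k)) h0

lemma polyExpKernel_symm (p : Polynomial ℝ) (α β x y : ℝ) :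
    polyExpKernel p α β x y = polyExpKernel p α β y x := by
  unfold polyExpKernel
  rw [mul_comm (Real.sqrt β * x - α / Real.sqrt β),
    show β*x*y - α*(x+y) = β*y*x - α*(y+x) from by ring]

lemma sum_psd (m : ℕ) (p : Fin m → Polynomial ℝ)
    (hp : ∀ i, ∀ k : ℕ, 0 ≤ (p i).coeff k)
    (α β : Fin m → ℝ) (hβ : ∀ i, 0 < β i)
    (n : ℕ) (x : Fin n → ℝ) :
    (Matrix.of fun j l =>
        ∑ i, polyExpKernel (p i) (α i) (β i) (x j) (x l)).PosSemidef := by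
  rw [Matrix.posSemidef_iff_dotProduct_mulVec]
  constructor
  · refine Matrix.IsHermitian.ext fun j l => ?_
    simp only [Matrix.of_apply, RCLike.star_def, starRingEnd_apply, star_trivial]
    exact Finset.sum_congr rfl fun i _ => polyExpKernel_symm _ _ _ _ _
  · intro v
    have hquad : dotProduct (star v) ((Matrix.of fun j l =>
          ∑ i, polyExpKernel (p i) (α i) (β i) (x j) (x l)).mulVec v)
        = ∑ i, ∑ j, ∑ l, v j * v l * polyExpKernel (p i) (α i) (β i) (x j) (x l) := by
      simp only [dotProduct, Matrix.mulVec, Matrix.of_apply, Pi.star_apply,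
        star_trivial, Finset.mul_sum, Finset.sum_mul]
      rw [(Finset.sum_congr rfl fun j _ => Finset.sum_comm).trans Finset.sum_comm]
      refine Finset.sum_congr rfl fun i _ => Finset.sum_congr rfl fun j _ =>
        Finset.sum_congr rfl fun l _ => by ring
    rw [hquad]
    exact Finset.sum_nonneg fun i _ => quad_nonneg (p i) (hp i) (α i) (β i) (hβ i) n x v

noncomputable def genFun (c : ℝ) (r : ℕ) : ℝ → ℝ := fun x => x ^ r * Real.exp (c * x)

lemma contDiff_genFun (c : ℝ) (r : ℕ) : ContDiff ℝ 1 (genFun c r) :=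
  (contDiff_id.pow r).mul (Real.contDiff_exp.comp (contDiff_const.mul contDiff_id))

lemma deriv_genFun (c : ℝ) (r : ℕ) :
    deriv (genFun c r) = (r : ℝ) • genFun c (r - 1) + c • genFun c r := by
  funext x
  have h : HasDerivAt (genFun c r)
      ((r : ℝ) * x ^ (r - 1) * Real.exp (c * x) + x ^ r * (Real.exp (c * x) * (c * 1))) x :=
    (hasDerivAt_pow r x).mul (((hasDerivAt_id x).const_mul c).exp)
  rw [h.deriv]
  simp only [Pi.add_apply, Pi.smul_apply, smul_eq_mul, genFun]
  ring

lemma poly_exp_mem (S : Set (ℝ → ℝ)) (c : ℝ) (D : ℕ) (hS : ∀ r : ℕ, r ≤ D → genFun c r ∈ S)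
    (q : Polynomial ℝ) (hq : q.natDegree ≤ D) :
    (fun x => q.eval x * Real.exp (c * x)) ∈ Submodule.span ℝ S := by
  have heq : (fun x => q.eval x * Real.exp (c * x))
      = ∑ r ∈ Finset.range (D + 1), q.coeff r • genFun c r := by
    funext x
    rw [Finset.sum_apply]
    simp only [Pi.smul_apply, smul_eq_mul, genFun]
    rw [Polynomial.eval_eq_sum_range' (lt_of_le_of_lt hq (Nat.lt_succ_self D)), Finset.sum_mul]
    exact Finset.sum_congr rfl fun r _ => by ring
  rw [heq]
  exact Submodule.sum_mem _ fun r hr => Submodule.smul_mem _ _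
    (Submodule.subset_span (hS r (Nat.lt_succ_iff.mp (Finset.mem_range.mp hr))))

lemma polyExpKernel_section (p : Polynomial ℝ) (α β : ℝ) (y x : ℝ) :
    polyExpKernel p α β y x
      = Real.exp (-(α * y)) *
        ((p.comp (Polynomial.C (Real.sqrt β * y - α / Real.sqrt β) *
            (Polynomial.C (Real.sqrt β) * Polynomial.X - Polynomial.C (α / Real.sqrt β)))).eval x
          * Real.exp ((β * y - α) * x)) := by
  unfold polyExpKernel
  rw [Polynomial.eval_comp]
  simp only [Polynomial.eval_mul, Polynomial.eval_sub, Polynomial.eval_C, Polynomial.eval_X]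
  rw [show β * y * x - α * (y + x) = (β * y - α) * x + (-(α * y)) from by ring, Real.exp_add]
  ring

lemma comp_natDegree_le (p : Polynomial ℝ) (a s b : ℝ) :
    (p.comp (Polynomial.C a * (Polynomial.C s * Polynomial.X - Polynomial.C b))).natDegree
      ≤ p.natDegree := by
  refine Polynomial.natDegree_comp_le.trans ?_
  have h1 : (Polynomial.C a * (Polynomial.C s * Polynomial.X - Polynomial.C b)).natDegree ≤ 1 := by
    compute_degree
  calc p.natDegree * (Polynomial.C a * (Polynomial.C s * Polynomial.X - Polynomial.C b)).natDegree
      ≤ p.natDegree * 1 := Nat.mul_le_mul_left _ h1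
    _ = p.natDegree := Nat.mul_one _

lemma fullyConsistent_sum (m : ℕ) (p : Fin m → Polynomial ℝ) (α β : Fin m → ℝ) :
    FullyConsistent (fun x y => ∑ i, polyExpKernel (p i) (α i) (β i) x y) := by
  intro N y _
  classical
  set D : ℕ := Finset.univ.sup fun i => (p i).natDegree with hD
  set S : Set (ℝ → ℝ) :=
    Set.range (fun t : Fin m × Fin N × Fin (D + 1) =>
      genFun (β t.1 * y t.2.1 - α t.1) (t.2.2 : ℕ)) with hSdef
  have key : ∀ f ∈ Submodule.span ℝ S,
      ContDiff ℝ 1 f ∧ deriv f ∈ Submodule.span ℝ S := by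
    intro f hf
    refine Submodule.span_induction
      (p := fun f _ => ContDiff ℝ 1 f ∧ deriv f ∈ Submodule.span ℝ S) ?_ ?_ ?_ ?_ hf
    · rintro f ⟨⟨i, j, r⟩, rfl⟩
      refine ⟨contDiff_genFun _ _, ?_⟩
      rw [deriv_genFun]
      have h1 : genFun (β i * y j - α i) ((r : ℕ) - 1) ∈ S :=
        ⟨⟨i, j, ⟨(r : ℕ) - 1, lt_of_le_of_lt (Nat.sub_le _ _) r.isLt⟩⟩, rfl⟩
      have h2 : genFun (β i * y j - α i) (r : ℕ) ∈ S := ⟨⟨i, j, r⟩, rfl⟩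
      exact Submodule.add_mem _
        (Submodule.smul_mem _ _ (Submodule.subset_span h1))
        (Submodule.smul_mem _ _ (Submodule.subset_span h2))
    · refine ⟨contDiff_const, ?_⟩
      have : deriv (0 : ℝ → ℝ) = 0 := by
        funext x; exact deriv_const x 0
      rw [this]; exact Submodule.zero_mem _
    · rintro f g hfm hgm ⟨hf1, hf2⟩ ⟨hg1, hg2⟩
      refine ⟨hf1.add hg1, ?_⟩
      have : deriv (f + g) = deriv f + deriv g := funext fun x =>
        deriv_add ((hf1.differentiable one_ne_zero) x) ((hg1.differentiable one_ne_zero) x)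
      rw [this]; exact Submodule.add_mem _ hf2 hg2
    · rintro a f hfm ⟨h1, h2⟩
      refine ⟨h1.const_smul a, ?_⟩
      have : deriv (a • f) = a • deriv f := funext fun x =>
        deriv_const_smul a ((h1.differentiable one_ne_zero) x)
      rw [this]; exact Submodule.smul_mem _ _ h2
  refine ⟨Submodule.span ℝ S, FiniteDimensional.span_of_finite ℝ (Set.finite_range _),
    fun f hf => (key f hf).1.contDiffOn, ?_, ?_⟩
  · intro f hf
    exact ⟨deriv f, (key f hf).2, fun x hx =>
      ((key f hf).1.differentiable one_ne_zero x).derivWithin (uniqueDiffOn_Ici 0 x hx)⟩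
  · intro j
    refine ⟨fun x => ∑ i, polyExpKernel (p i) (α i) (β i) (y j) x, ?_, fun x _ => rfl⟩
    have heq : (fun x => ∑ i, polyExpKernel (p i) (α i) (β i) (y j) x)
        = ∑ i, Real.exp (-(α i * y j)) •
            (fun x => ((p i).comp (Polynomial.C (Real.sqrt (β i) * y j - α i / Real.sqrt (β i)) *
                (Polynomial.C (Real.sqrt (β i)) * Polynomial.X -
                  Polynomial.C (α i / Real.sqrt (β i))))).eval x *
              Real.exp ((β i * y j - α i) * x)) := by
      funext x
      rw [Finset.sum_apply]
      exact Finset.sum_congr rfl fun i _ => by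
        rw [Pi.smul_apply, smul_eq_mul, polyExpKernel_section]
    rw [heq]
    refine Submodule.sum_mem _ fun i _ => Submodule.smul_mem _ _ ?_
    refine poly_exp_mem S (β i * y j - α i) D
      (fun r hr => ⟨⟨i, j, ⟨r, by omega⟩⟩, rfl⟩) _
      ((comp_natDegree_le _ _ _ _).trans (by rw [hD]; exact Finset.le_sup (f := fun i => (p i).natDegree) (Finset.mem_univ i)))

theorem sum_polyExpKernel_posSemidef_and_fullyConsistent
    (m : ℕ) (p : Fin m → Polynomial ℝ)
    (hp : ∀ i, ∀ k : ℕ, 0 ≤ (p i).coeff k)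
    (α β : Fin m → ℝ) (hα : ∀ i, 0 ≤ α i) (hβ : ∀ i, 0 < β i) :
    (∀ x ∈ Set.Ici (0 : ℝ), ∀ y ∈ Set.Ici (0 : ℝ),
        ∑ i, polyExpKernel (p i) (α i) (β i) x y
          = ∑ i, polyExpKernel (p i) (α i) (β i) y x) ∧
    (∀ (n : ℕ) (x : Fin n → ℝ), (∀ j, 0 ≤ x j) →
        (Matrix.of fun j l =>
          ∑ i, polyExpKernel (p i) (α i) (β i) (x j) (x l)).PosSemidef) ∧
    FullyConsistent (fun x y => ∑ i, polyExpKernel (p i) (α i) (β i) x y) := by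
  exact ⟨fun x _ y _ => Finset.sum_congr rfl fun i _ => polyExpKernel_symm _ _ _ _ _,
    fun n x _ => sum_psd m p hp α β hβ n x,
    fullyConsistent_sum m p α β⟩
end

section
/- Let p : ℝ₊ × ℝ₊ → ℝ be a symmetric positive semidefinite polynomial, i.e. p is the restriction to ℝ₊ × ℝ₊ of a real polynomial in two variables, p(x,y) = p(y,x) for all x,y ≥ 0, and for every finite collection of points x₁,…,xₙ ∈ ℝ₊ the matrix (p(xᵢ,xⱼ))ᵢⱼ is positive semidefinite. Assume there exists x₀ ≥ 0 such that p(x₀,x₀) = 0. Then there exists a symmetric positive semidefinite polynomial r : ℝ₊ × ℝ₊ → ℝ such that p(x,y) = (x − x₀)(y − x₀)·r(x,y) for all x, y ≥ 0. -/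
/-!
STATEMENT 7: Let `p` be a symmetric positive semidefinite polynomial on
`ℝ₊ × ℝ₊` (a real polynomial in two variables with `p (x, y) = p (y, x)` for
`x, y ≥ 0` whose Gram matrices at points of `ℝ₊` are positive semidefinite).
If `p (x₀, x₀) = 0` for some `x₀ ≥ 0`, then there is a symmetric positive
semidefinite polynomial `r` with `p (x, y) = (x − x₀)(y − x₀) r (x, y)` for all
`x, y ≥ 0`.
-/

/-- Evaluation of a two-variable real polynomial. -/
noncomputable def eval2 (p : MvPolynomial (Fin 2) ℝ) (x y : ℝ) : ℝ :=
  MvPolynomial.eval ![x, y] p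

/-- `p` is a symmetric positive semidefinite polynomial on `ℝ₊ × ℝ₊`. -/
def IsSymmPSDPoly (p : MvPolynomial (Fin 2) ℝ) : Prop :=
  (∀ x ∈ Set.Ici (0 : ℝ), ∀ y ∈ Set.Ici (0 : ℝ), eval2 p x y = eval2 p y x) ∧
  (∀ (n : ℕ) (x : Fin n → ℝ), (∀ i, 0 ≤ x i) →
    (Matrix.of fun i j => eval2 p (x i) (x j)).PosSemidef)

/- ### Auxiliary machinery -/

/-- View a two-variable polynomial as an iterated one-variable polynomial:
variable `0` becomes the inner `X`, variable `1` the outer `X`. -/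
noncomputable def toP : MvPolynomial (Fin 2) ℝ →+* Polynomial (Polynomial ℝ) :=
  MvPolynomial.eval₂Hom (Polynomial.C.comp Polynomial.C)
    ![Polynomial.C Polynomial.X, Polynomial.X]

/-- Evaluation of an iterated polynomial at `(x, y)`. -/
noncomputable def Ehom (x y : ℝ) : Polynomial (Polynomial ℝ) →+* ℝ :=
  Polynomial.eval₂RingHom (Polynomial.evalRingHom x) y

/-- Back from iterated one-variable polynomials to two-variable polynomials. -/
noncomputable def backP : Polynomial (Polynomial ℝ) →+* MvPolynomial (Fin 2) ℝ :=
  Polynomial.eval₂RingHom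
    (Polynomial.eval₂RingHom MvPolynomial.C (MvPolynomial.X 0)) (MvPolynomial.X 1)

lemma eval2_toP (q : MvPolynomial (Fin 2) ℝ) (x y : ℝ) :
    MvPolynomial.eval ![x, y] q = Ehom x y (toP q) := by
  rw [toP, MvPolynomial.coe_eval₂Hom,
    MvPolynomial.eval₂_comp_left (Ehom x y) (Polynomial.C.comp Polynomial.C)
      ![Polynomial.C Polynomial.X, Polynomial.X] q]
  have h1 : (Ehom x y).comp (Polynomial.C.comp Polynomial.C) = RingHom.id ℝ := by
    ext a; simp [Ehom]
  have h2 : (Ehom x y) ∘ ![Polynomial.C Polynomial.X, Polynomial.X] = ![x, y] := by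
    funext i; fin_cases i <;> simp [Ehom]
  rw [h1, h2]
  rfl

lemma eval2_backP (T : Polynomial (Polynomial ℝ)) (x y : ℝ) :
    MvPolynomial.eval ![x, y] (backP T) = Ehom x y T := by
  rw [backP, Polynomial.coe_eval₂RingHom, Polynomial.hom_eval₂]
  have h1 : (MvPolynomial.eval ![x, y]).comp
      (Polynomial.eval₂RingHom MvPolynomial.C (MvPolynomial.X 0) :
        Polynomial ℝ →+* MvPolynomial (Fin 2) ℝ) = Polynomial.evalRingHom x := by
    apply Polynomial.ringHom_ext <;> simp
  rw [h1]
  simp [Ehom]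

lemma eval_eval_C (P : Polynomial (Polynomial ℝ)) (x y : ℝ) :
    Polynomial.eval x (Polynomial.eval (Polynomial.C y) P) = Ehom x y P := by
  induction P using Polynomial.induction_on with
  | C a => simp [Ehom]
  | add f g hf hg => simp [hf, hg]
  | monomial n a ih => simp [Ehom]

lemma quadform_eq {n : ℕ} (M : Matrix (Fin n) (Fin n) ℝ) (v : Fin n → ℝ) :
    dotProduct (star v) (M.mulVec v) = ∑ i, ∑ j, v i * v j * M i j := by
  simp only [star_trivial, dotProduct, Matrix.mulVec, Finset.mul_sum]
  exact Finset.sum_congr rfl fun i _ => Finset.sum_congr rfl fun j _ => by ring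

lemma quadform_nonneg {n : ℕ} {M : Matrix (Fin n) (Fin n) ℝ} (hM : M.PosSemidef)
    (v : Fin n → ℝ) : 0 ≤ ∑ i, ∑ j, v i * v j * M i j := by
  have h := hM.dotProduct_mulVec_nonneg v
  rwa [quadform_eq] at h

lemma posSemidef_of_quadform {n : ℕ} {M : Matrix (Fin n) (Fin n) ℝ}
    (hsym : ∀ i j, M i j = M j i)
    (h : ∀ v : Fin n → ℝ, 0 ≤ ∑ i, ∑ j, v i * v j * M i j) : M.PosSemidef := by
  refine Matrix.PosSemidef.of_dotProduct_mulVec_nonneg ?_ ?_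
  · ext i j
    simp [Matrix.conjTranspose_apply, hsym i j]
  · intro v
    rw [quadform_eq]; exact h v

open scoped MatrixOrder in
lemma psd_entry_zero {n : ℕ} {M : Matrix (Fin n) (Fin n) ℝ} (hM : M.PosSemidef)
    {i j : Fin n} (hi : M i i = 0) : M i j = 0 := by
  obtain ⟨B, rfl⟩ : ∃ B : Matrix (Fin n) (Fin n) ℝ, M = B.conjTranspose * B := by
    obtain ⟨X, hX, -, hXX⟩ :=
      sub_zero M ▸ CFC.exists_sqrt_of_isSelfAdjoint_of_quasispectrumRestricts hM.isHermitian
        (QuasispectrumRestricts.nnreal_of_nonneg hM.nonneg)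
    rw [sub_zero] at hXX
    refine ⟨X, ?_⟩
    rw [← hXX, ← Matrix.star_eq_conjTranspose, hX.star_eq]
  have hij : ∀ k, B k i = 0 := by
    have h0 : ∑ k, B k i * B k i = 0 := by
      simpa [Matrix.mul_apply, Matrix.conjTranspose_apply] using hi
    intro k
    have := (Finset.sum_eq_zero_iff_of_nonneg (fun k _ => mul_self_nonneg (B k i))).mp h0 k
      (Finset.mem_univ k)
    exact mul_self_eq_zero.mp this
  simp [Matrix.mul_apply, Matrix.conjTranspose_apply, hij]

lemma nonneg_at_zero_of_pos {g : ℝ → ℝ} (hg : Continuous g) (h : ∀ ε > 0, 0 ≤ g ε) :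
    0 ≤ g 0 := by
  have ht : Filter.Tendsto g (nhdsWithin 0 (Set.Ioi 0)) (nhds (g 0)) :=
    (hg.tendsto 0).mono_left nhdsWithin_le_nhds
  exact ge_of_tendsto ht (eventually_nhdsWithin_of_forall fun x hx => h x hx)

lemma zero_at_zero_of_pos {g : ℝ → ℝ} (hg : Continuous g) (h : ∀ ε > 0, g ε = 0) :
    g 0 = 0 := by
  have h1 : 0 ≤ g 0 := nonneg_at_zero_of_pos hg fun ε hε => (h ε hε).ge
  have h2 : 0 ≤ -g 0 := nonneg_at_zero_of_pos hg.neg fun ε hε => by simp [h ε hε]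
  linarith

lemma continuous_eval2_comp (q : MvPolynomial (Fin 2) ℝ) {a b : ℝ → ℝ}
    (ha : Continuous a) (hb : Continuous b) :
    Continuous fun ε => eval2 q (a ε) (b ε) := by
  have h1 : Continuous fun v : Fin 2 → ℝ => MvPolynomial.eval v q :=
    MvPolynomial.continuous_eval q
  have h2 : Continuous fun ε => (![a ε, b ε] : Fin 2 → ℝ) := by
    apply continuous_pi; intro i; fin_cases i <;> simpa
  exact h1.comp h2

set_option maxHeartbeats 1000000 in
theorem factor_root_of_symm_psd_poly
    (p : MvPolynomial (Fin 2) ℝ) (hp : IsSymmPSDPoly p)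
    (x₀ : ℝ) (hx₀ : 0 ≤ x₀) (hzero : eval2 p x₀ x₀ = 0) :
    ∃ r : MvPolynomial (Fin 2) ℝ, IsSymmPSDPoly r ∧
      ∀ x ∈ Set.Ici (0 : ℝ), ∀ y ∈ Set.Ici (0 : ℝ),
        eval2 p x y = (x - x₀) * (y - x₀) * eval2 r x y := by
  obtain ⟨hsym, hpsd⟩ := hp
  -- Step 1: the row/column through x₀ vanishes on ℝ₊.
  have hrow : ∀ x, 0 ≤ x → eval2 p x₀ x = 0 := by
    intro x hx
    have hM := hpsd 2 ![x, x₀] (fun i => by fin_cases i <;> simpa)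
    have h11 : (Matrix.of fun i j => eval2 p (![x, x₀] i) (![x, x₀] j)) 1 1 = 0 := by
      simpa using hzero
    have := psd_entry_zero hM (i := 1) (j := 0) h11
    simpa using this
  have hrow' : ∀ x, 0 ≤ x → eval2 p x x₀ = 0 := fun x hx => by
    rw [hsym x hx x₀ hx₀]; exact hrow x hx
  set P := toP p with hPdef
  have hEP : ∀ x y : ℝ, eval2 p x y = Ehom x y P := fun x y => eval2_toP p x y
  -- Step 2: factor out (Y - x₀).
  have hgroot : Polynomial.eval (Polynomial.C x₀) P = 0 := by
    apply Polynomial.eq_zero_of_infinite_isRoot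
    apply Set.Infinite.mono _ (Set.Ici_infinite (0 : ℝ))
    intro x hx
    show Polynomial.eval x (Polynomial.eval (Polynomial.C x₀) P) = 0
    rw [eval_eval_C, ← hEP]
    exact hrow' x hx
  obtain ⟨S, hPS⟩ := (Polynomial.dvd_iff_isRoot.mpr hgroot)
  -- Step 3: factor out (X - x₀) from S.
  have hEhomP : ∀ x y : ℝ, Ehom x y P = (y - x₀) * Ehom x y S := by
    intro x y
    rw [hPS]
    simp [Ehom]
  have hS0 : S.map (Polynomial.evalRingHom x₀) = 0 := by
    apply Polynomial.eq_zero_of_infinite_isRoot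
    apply Set.Infinite.mono _ ((Set.Ici_infinite (0 : ℝ)).diff (Set.finite_singleton x₀))
    rintro y ⟨hy, hy0⟩
    show Polynomial.eval y (S.map (Polynomial.evalRingHom x₀)) = 0
    rw [Polynomial.eval_map]
    have h1 : Ehom x₀ y P = 0 := by rw [← hEP]; exact hrow y hy
    rw [hEhomP x₀ y] at h1
    have hy' : y - x₀ ≠ 0 := sub_ne_zero.mpr (by simpa using hy0)
    have := (mul_eq_zero.mp h1).resolve_left hy'
    simpa [Ehom] using this
  have hdvd : Polynomial.C (Polynomial.X - Polynomial.C x₀) ∣ S := by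
    rw [Polynomial.C_dvd_iff_dvd_coeff]
    intro k
    rw [Polynomial.dvd_iff_isRoot]
    have := congrArg (fun q => Polynomial.coeff q k) hS0
    simpa [Polynomial.coeff_map] using this
  obtain ⟨T, hST⟩ := hdvd
  have hkey : ∀ x y : ℝ, eval2 p x y = (x - x₀) * (y - x₀) * eval2 (backP T) x y := by
    intro x y
    have hr : eval2 (backP T) x y = Ehom x y T := eval2_backP T x y
    rw [hEP, hPS, hST, hr]
    simp only [map_mul, map_sub, Ehom, Polynomial.coe_eval₂RingHom, Polynomial.eval₂_X,
      Polynomial.eval₂_C, Polynomial.eval_X, Polynomial.eval_C, Polynomial.coe_evalRingHom,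
      Polynomial.eval₂_sub, Polynomial.eval_sub]
    ring
  have hsymr : ∀ x y : ℝ, 0 ≤ x → 0 ≤ y → x ≠ x₀ → y ≠ x₀ →
      eval2 (backP T) x y = eval2 (backP T) y x := by
    intro x y hx hy hxx hyy
    have h := hsym x hx y hy
    rw [hkey x y, hkey y x] at h
    rw [show (y - x₀) * (x - x₀) = (x - x₀) * (y - x₀) from mul_comm _ _] at h
    rw [mul_assoc, mul_assoc] at h
    have hx' : x - x₀ ≠ 0 := sub_ne_zero.mpr hxx
    have hy' : y - x₀ ≠ 0 := sub_ne_zero.mpr hyy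
    have := mul_left_cancel₀ hx' h
    exact mul_left_cancel₀ hy' this
  have hsymfull : ∀ x ∈ Set.Ici (0 : ℝ), ∀ y ∈ Set.Ici (0 : ℝ),
      eval2 (backP T) x y = eval2 (backP T) y x := by
    intro x hx y hy
    simp only [Set.mem_Ici] at hx hy
    set a : ℝ → ℝ := fun ε => if x = x₀ then x₀ + ε else x with ha
    set b : ℝ → ℝ := fun ε => if y = x₀ then x₀ + ε else y with hb
    have hca : Continuous a := by
      rw [ha]
      rcases eq_or_ne x x₀ with h | h
      · simp only [h, ite_true]; exact continuous_const.add continuous_id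
      · simp only [h, ite_false]; exact continuous_const
    have hcb : Continuous b := by
      rw [hb]
      rcases eq_or_ne y x₀ with h | h
      · simp only [h, ite_true]; exact continuous_const.add continuous_id
      · simp only [h, ite_false]; exact continuous_const
    have ha0 : a 0 = x := by rcases eq_or_ne x x₀ with h | h <;> simp [ha, h]
    have hb0 : b 0 = y := by rcases eq_or_ne y x₀ with h | h <;> simp [hb, h]
    have haP : ∀ ε : ℝ, 0 < ε → 0 ≤ a ε ∧ a ε ≠ x₀ := by
      intro ε hε
      rcases eq_or_ne x x₀ with h | h
      · simp only [ha, h, ite_true]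
        exact ⟨by linarith, by intro hc; linarith⟩
      · simp only [ha, h, ite_false]
        exact ⟨hx, h⟩
    have hbP : ∀ ε : ℝ, 0 < ε → 0 ≤ b ε ∧ b ε ≠ x₀ := by
      intro ε hε
      rcases eq_or_ne y x₀ with h | h
      · simp only [hb, h, ite_true]
        exact ⟨by linarith, by intro hc; linarith⟩
      · simp only [hb, h, ite_false]
        exact ⟨hy, h⟩
    have hz := zero_at_zero_of_pos
      (g := fun ε => eval2 (backP T) (a ε) (b ε) - eval2 (backP T) (b ε) (a ε))
      ((continuous_eval2_comp _ hca hcb).sub (continuous_eval2_comp _ hcb hca))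
      (fun ε hε => by
        have h1 := haP ε hε
        have h2 := hbP ε hε
        simp [hsymr (a ε) (b ε) h1.1 h2.1 h1.2 h2.2])
    simp only [ha0, hb0] at hz
    linarith [hz]
  -- The candidate r and the key global identity.
  refine ⟨backP T, ⟨hsymfull, ?_⟩, fun x hx y hy => hkey x y⟩
  intro n x hxn
  apply posSemidef_of_quadform
  · intro i j
    simp only [Matrix.of_apply]
    exact hsymfull _ (Set.mem_Ici.mpr (hxn i)) _ (Set.mem_Ici.mpr (hxn j))
  · intro v
    set a : ℝ → Fin n → ℝ := fun ε i => if x i = x₀ then x₀ + ε else x i with ha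
    have haP : ∀ ε : ℝ, 0 < ε → ∀ i, 0 ≤ a ε i ∧ a ε i ≠ x₀ := by
      intro ε hε i
      rcases eq_or_ne (x i) x₀ with h | h
      · simp only [ha, h, ite_true]
        exact ⟨by linarith [hx₀], by intro hc; linarith⟩
      · simp only [ha, h, ite_false]
        exact ⟨hxn i, h⟩
    have ha0 : ∀ i, a 0 i = x i := by
      intro i; rcases eq_or_ne (x i) x₀ with h | h <;> simp [ha, h]
    have hcai : ∀ i, Continuous fun ε => a ε i := by
      intro i
      rcases eq_or_ne (x i) x₀ with h | h
      · simp only [ha, h, ite_true]; exact continuous_const.add continuous_id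
      · simp only [ha, h, ite_false]; exact continuous_const
    have hg : ∀ ε > 0,
        0 ≤ (fun ε => ∑ i, ∑ j, v i * v j * eval2 (backP T) (a ε i) (a ε j)) ε := by
      intro ε hε
      set d : Fin n → ℝ := fun i => v i / (a ε i - x₀) with hd
      have hq := quadform_nonneg (hpsd n (a ε) (fun i => (haP ε hε i).1)) d
      have hterm : ∀ i j : Fin n,
          d i * d j * (Matrix.of fun i j => eval2 p (a ε i) (a ε j)) i j
          = v i * v j * eval2 (backP T) (a ε i) (a ε j) := by
        intro i j
        have hi' : a ε i - x₀ ≠ 0 := sub_ne_zero.mpr (haP ε hε i).2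
        have hj' : a ε j - x₀ ≠ 0 := sub_ne_zero.mpr (haP ε hε j).2
        simp only [Matrix.of_apply, hd]
        rw [hkey]
        field_simp
      calc (0:ℝ) ≤ ∑ i, ∑ j, d i * d j *
            (Matrix.of fun i j => eval2 p (a ε i) (a ε j)) i j := hq
        _ = ∑ i, ∑ j, v i * v j * eval2 (backP T) (a ε i) (a ε j) :=
            Finset.sum_congr rfl fun i _ => Finset.sum_congr rfl fun j _ => hterm i j
    have hcont : Continuous fun ε => ∑ i, ∑ j, v i * v j * eval2 (backP T) (a ε i) (a ε j) := by
      apply continuous_finset_sum; intro i _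
      apply continuous_finset_sum; intro j _
      exact continuous_const.mul (continuous_eval2_comp _ (hcai i) (hcai j))
    have hres := nonneg_at_zero_of_pos hcont hg
    simpa only [ha0, Matrix.of_apply] using hres
end

section
/- Let p : ℝ₊ × ℝ₊ → ℝ be a symmetric positive semidefinite polynomial. Then there exist a one-variable real polynomial q : ℝ₊ → ℝ and a symmetric positive semidefinite polynomial r : ℝ₊ × ℝ₊ → ℝ such that (i) p(x,y) = q(x)·q(y)·r(x,y) for all x, y ≥ 0, and (ii) r(x,x) > 0 for all x ≥ 0. -/
namespace SymmPSD

noncomputable def E2 : MvPolynomial (Fin 2) ℝ ≃ₐ[ℝ] Polynomial (Polynomial ℝ) :=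
  (MvPolynomial.finSuccEquiv ℝ 1).trans
    (Polynomial.mapAlgEquiv ((MvPolynomial.finSuccEquiv ℝ 0).trans
      (Polynomial.mapAlgEquiv (MvPolynomial.isEmptyAlgEquiv ℝ (Fin 0)))))

lemma E2_C (a : ℝ) : E2 (MvPolynomial.C a) = Polynomial.C (Polynomial.C a) := by
  have h1 : (MvPolynomial.C a : MvPolynomial (Fin 2) ℝ) = algebraMap ℝ _ a := rfl
  rw [h1, AlgEquiv.commutes]
  simp [Polynomial.algebraMap_apply]

lemma E2_X0 : E2 (MvPolynomial.X 0) = Polynomial.X := by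
  simp [E2, MvPolynomial.finSuccEquiv_X_zero, Polynomial.mapAlgEquiv]

lemma E2_X1 : E2 (MvPolynomial.X 1) = Polynomial.C Polynomial.X := by
  have h1 : MvPolynomial.finSuccEquiv ℝ 1 (MvPolynomial.X 1) =
      Polynomial.C (MvPolynomial.X 0) := by
    have := MvPolynomial.finSuccEquiv_X_succ (R := ℝ) (n := 1) (j := 0)
    simpa using this
  rw [E2, AlgEquiv.trans_apply, h1]
  simp [Polynomial.coe_mapAlgEquiv, Polynomial.map_C, AlgEquiv.trans_apply,
    MvPolynomial.finSuccEquiv_X_zero, Polynomial.map_X]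

noncomputable def evP (P : Polynomial (Polynomial ℝ)) (x y : ℝ) : ℝ :=
  Polynomial.eval x (P.map (Polynomial.evalRingHom y))

lemma eval2_eq (p : MvPolynomial (Fin 2) ℝ) (x y : ℝ) :
    eval2 p x y = evP (E2 p) x y := by
  induction p using MvPolynomial.induction_on with
  | C a => simp [eval2, evP, E2_C]
  | add p q hp hq =>
      simp only [eval2, evP, map_add, Polynomial.map_add, Polynomial.eval_add] at *
      rw [hp, hq]
  | mul_X p i hp =>
      simp only [eval2, evP, map_mul, Polynomial.eval_mul, MvPolynomial.eval_mul] at *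
      rw [hp]
      fin_cases i
      · simp [E2_X0]
      · simp [E2_X1]

lemma evP_mul (P Q : Polynomial (Polynomial ℝ)) (x y : ℝ) :
    evP (P * Q) x y = evP P x y * evP Q x y := by
  simp [evP, Polynomial.map_mul]

noncomputable def diag (p : MvPolynomial (Fin 2) ℝ) : Polynomial ℝ :=
  (E2 p).eval Polynomial.X

lemma diag_eval (p : MvPolynomial (Fin 2) ℝ) (t : ℝ) :
    (diag p).eval t = eval2 p t t := by
  rw [eval2_eq]
  have h1 : (E2 p).eval (Polynomial.X : Polynomial ℝ) =
      Polynomial.eval₂ (RingHom.id _) Polynomial.X (E2 p) := rfl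
  have h2 : (diag p).eval t = (Polynomial.evalRingHom t) ((E2 p).eval Polynomial.X) := rfl
  rw [h2, h1, Polynomial.hom_eval₂]
  rw [evP, Polynomial.eval_map]
  simp

lemma cont2 (p : MvPolynomial (Fin 2) ℝ) {f g : ℝ → ℝ} (hf : Continuous f)
    (hg : Continuous g) : Continuous fun s => eval2 p (f s) (g s) := by
  induction p using MvPolynomial.induction_on with
  | C a => simpa [eval2] using continuous_const
  | add p q hp hq =>
      simp only [eval2, map_add] at *
      exact hp.add hq
  | mul_X p i hp =>
      simp only [eval2, map_mul, MvPolynomial.eval_X] at *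
      refine hp.mul ?_
      fin_cases i
      · simpa using hf
      · simpa using hg

lemma nonneg_at_zero {f : ℝ → ℝ} (hf : Continuous f) (h : ∀ s, 0 < s → 0 ≤ f s) :
    0 ≤ f 0 := by
  have ht : Filter.Tendsto f (nhdsWithin 0 (Set.Ioi 0)) (nhds (f 0)) :=
    (hf.tendsto 0).mono_left nhdsWithin_le_nhds
  refine ge_of_tendsto ht ?_
  filter_upwards [self_mem_nhdsWithin] with s hs using h s hs

lemma zero_at_zero {f : ℝ → ℝ} (hf : Continuous f) (h : ∀ s, 0 < s → f s = 0) :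
    f 0 = 0 := by
  have h1 : 0 ≤ f 0 := nonneg_at_zero hf fun s hs => (h s hs).ge
  have h2 : 0 ≤ (-f) 0 := nonneg_at_zero hf.neg fun s hs => by simp [h s hs]
  simp only [Pi.neg_apply, Left.nonneg_neg_iff] at h2
  linarith

lemma quadform_nonneg {p : MvPolynomial (Fin 2) ℝ} (hp : IsSymmPSDPoly p) {n : ℕ}
    (x : Fin n → ℝ) (hx : ∀ i, 0 ≤ x i) (c : Fin n → ℝ) :
    0 ≤ ∑ i, ∑ j, c i * c j * eval2 p (x i) (x j) := by
  have h := (hp.2 n x hx).dotProduct_mulVec_nonneg c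
  simp only [dotProduct, Matrix.mulVec, Matrix.of_apply, star_trivial,
    Finset.mul_sum] at h
  calc (0:ℝ) ≤ ∑ i, ∑ j, c i * (eval2 p (x i) (x j) * c j) := h
    _ = ∑ i, ∑ j, c i * c j * eval2 p (x i) (x j) := by
        refine Finset.sum_congr rfl fun i _ => Finset.sum_congr rfl fun j _ => by ring

lemma isSymmPSD_of {p : MvPolynomial (Fin 2) ℝ}
    (hs : ∀ x ∈ Set.Ici (0 : ℝ), ∀ y ∈ Set.Ici (0 : ℝ), eval2 p x y = eval2 p y x)
    (hq : ∀ (n : ℕ) (x : Fin n → ℝ), (∀ i, 0 ≤ x i) → ∀ c : Fin n → ℝ,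
      0 ≤ ∑ i, ∑ j, c i * c j * eval2 p (x i) (x j)) : IsSymmPSDPoly p := by
  refine ⟨hs, fun n x hx => Matrix.PosSemidef.of_dotProduct_mulVec_nonneg ?_ fun c => ?_⟩
  · ext i j
    simp only [Matrix.conjTranspose_apply, Matrix.of_apply, star_trivial]
    exact (hs (x i) (hx i) (x j) (hx j)).symm
  · have h := hq n x hx c
    simp only [dotProduct, Matrix.mulVec, Matrix.of_apply, star_trivial,
      Finset.mul_sum]
    calc (0:ℝ) ≤ ∑ i, ∑ j, c i * c j * eval2 p (x i) (x j) := h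
      _ = ∑ i, ∑ j, c i * (eval2 p (x i) (x j) * c j) := by
          refine Finset.sum_congr rfl fun i _ => Finset.sum_congr rfl fun j _ => by ring

lemma diag_nonneg {p : MvPolynomial (Fin 2) ℝ} (hp : IsSymmPSDPoly p) {x : ℝ}
    (hx : 0 ≤ x) : 0 ≤ eval2 p x x := by
  have h := quadform_nonneg hp ![x] (fun i => by fin_cases i <;> simpa) ![1]
  simpa using h

lemma cs {p : MvPolynomial (Fin 2) ℝ} (hp : IsSymmPSDPoly p) {x y : ℝ}
    (hx : 0 ≤ x) (hy : 0 ≤ y) :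
    eval2 p x y ^ 2 ≤ eval2 p x x * eval2 p y y := by
  have key : ∀ t : ℝ, 0 ≤ eval2 p x x * (t * t) + (2 * eval2 p x y) * t + eval2 p y y := by
    intro t
    have h := quadform_nonneg hp ![x, y] (fun i => by fin_cases i <;> simpa) ![t, 1]
    have hsym := hp.1 y hy x hx
    simp only [Fin.sum_univ_two, Matrix.cons_val_zero, Matrix.cons_val_one, Matrix.head_cons] at h
    rw [hsym] at h
    nlinarith [h]
  have hd := discrim_le_zero key
  simp only [discrim] at hd
  nlinarith [hd]

lemma poly_zero_of_vanish {T : Polynomial ℝ} {a : ℝ}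
    (h : ∀ x, 0 ≤ x → x ≠ a → T.eval x = 0) : T = 0 := by
  refine T.eq_zero_of_infinite_isRoot ?_
  refine (((Set.Ici_infinite (0:ℝ)).diff (Set.finite_singleton a)).mono ?_)
  rintro x ⟨hx1, hx2⟩
  exact h x hx1 (by simpa using hx2)

lemma divide {p : MvPolynomial (Fin 2) ℝ} (hp : IsSymmPSDPoly p) {a : ℝ} (ha : 0 ≤ a)
    (h0 : ∀ y ∈ Set.Ici (0 : ℝ), eval2 p a y = 0) :
    ∃ r : MvPolynomial (Fin 2) ℝ,
      (∀ x y : ℝ, eval2 p x y = (x - a) * (y - a) * eval2 r x y) ∧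
      diag p = (Polynomial.X - Polynomial.C a) ^ 2 * diag r := by
  set P := E2 p with hP
  -- Step 1 : (X - C (C a)) ∣ P
  have hPa : P.eval (Polynomial.C a) = 0 := by
    refine poly_zero_of_vanish (a := -1) fun y hy _ => ?_
    have hev : Polynomial.eval y (P.eval (Polynomial.C a)) = evP P a y := by
      have h1 : P.eval (Polynomial.C a) =
          Polynomial.eval₂ (RingHom.id _) (Polynomial.C a) P := rfl
      have h2 : Polynomial.eval y (P.eval (Polynomial.C a)) =
          (Polynomial.evalRingHom y) (P.eval (Polynomial.C a)) := rfl
      rw [h2, h1, Polynomial.hom_eval₂, evP, Polynomial.eval_map]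
      simp
    rw [hev, ← eval2_eq]
    exact h0 y hy
  obtain ⟨S, hS⟩ := (Polynomial.dvd_iff_isRoot.mpr hPa)
  -- Step 2 : C (X - C a) ∣ S
  have hT : S.map (Polynomial.evalRingHom a) = 0 := by
    refine poly_zero_of_vanish (a := a) fun x hx hxa => ?_
    have h1 : evP P x a = eval2 p x a := (eval2_eq p x a).symm
    have h2 : eval2 p x a = 0 := by
      rw [hp.1 x hx a ha]; exact h0 x hx
    have h3 : evP P x a = (x - a) * Polynomial.eval x (S.map (Polynomial.evalRingHom a)) := by
      rw [hS, evP_mul]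
      congr 1
      simp [evP, Polynomial.map_sub]
    have := h3.symm.trans (h1.trans h2)
    rcases mul_eq_zero.mp this with h | h
    · exact absurd (sub_eq_zero.mp h) hxa
    · exact h
  have hdvd2 : Polynomial.C (Polynomial.X - Polynomial.C a) ∣ S := by
    rw [Polynomial.C_dvd_iff_dvd_coeff]
    intro k
    rw [Polynomial.dvd_iff_isRoot]
    have : (S.map (Polynomial.evalRingHom a)).coeff k = 0 := by rw [hT]; simp
    simpa [Polynomial.coeff_map] using this
  obtain ⟨R, hR⟩ := hdvd2
  refine ⟨E2.symm R, ?_, ?_⟩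
  · intro x y
    have hPfac : P = (Polynomial.X - Polynomial.C (Polynomial.C a)) *
        (Polynomial.C (Polynomial.X - Polynomial.C a)) * R := by
      rw [hS, hR]; ring
    have hER : E2 (E2.symm R) = R := E2.apply_symm_apply R
    rw [eval2_eq, hP] at *
    rw [eval2_eq, hER, hPfac, evP_mul, evP_mul]
    congr 2
    · simp [evP, Polynomial.map_sub]
    · simp [evP, Polynomial.map_C]
  · have hPfac : P = (Polynomial.X - Polynomial.C (Polynomial.C a)) *
        (Polynomial.C (Polynomial.X - Polynomial.C a)) * R := by
      rw [hS, hR]; ring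
    rw [diag, diag, E2.apply_symm_apply, ← hP, hPfac]
    simp only [Polynomial.eval_mul, Polynomial.eval_sub, Polynomial.eval_X,
      Polynomial.eval_C]
    ring

noncomputable def pert (a x s : ℝ) : ℝ := if x = a then x + s else x

lemma pert_cont (a x : ℝ) : Continuous (pert a x) := by
  unfold pert
  by_cases h : x = a
  · simp only [h, if_true]; fun_prop
  · simp only [h, if_false]; fun_prop

lemma pert_zero (a x : ℝ) : pert a x 0 = x := by
  unfold pert; by_cases h : x = a <;> simp [h]

lemma pert_nonneg {a x : ℝ} (hx : 0 ≤ x) {s : ℝ} (hs : 0 ≤ s) : 0 ≤ pert a x s := by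
  unfold pert
  by_cases h : x = a
  · simp only [h, if_true]; linarith
  · simp only [h, if_false]; exact hx

lemma pert_ne (a x : ℝ) {s : ℝ} (hs : 0 < s) : pert a x s ≠ a := by
  unfold pert
  by_cases h : x = a
  · simp only [h, if_true]; intro hc; linarith
  · simp only [h, if_false]; exact h


lemma one_psd : IsSymmPSDPoly 1 := by
  refine isSymmPSD_of (by simp [eval2]) fun n x hx c => ?_
  have h1 : ∀ i j : Fin n, c i * c j * eval2 1 (x i) (x j) = c i * c j := by
    intro i j; simp [eval2]
  simp only [h1]
  have : ∑ i, ∑ j, c i * c j = (∑ i, c i) ^ 2 := by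
    rw [sq, Finset.sum_mul_sum]
  rw [this]; positivity

lemma key : ∀ n : ℕ, ∀ p : MvPolynomial (Fin 2) ℝ, IsSymmPSDPoly p →
    (diag p).natDegree ≤ n →
    ∃ (q : Polynomial ℝ) (r : MvPolynomial (Fin 2) ℝ),
      IsSymmPSDPoly r ∧
      (∀ x ∈ Set.Ici (0 : ℝ), ∀ y ∈ Set.Ici (0 : ℝ),
        eval2 p x y = q.eval x * q.eval y * eval2 r x y) ∧
      (∀ x ∈ Set.Ici (0 : ℝ), 0 < eval2 r x x) := by
  intro n
  induction n using Nat.strong_induction_on with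
  | _ n IH =>
  intro p hp hdeg
  by_cases hA : ∀ x ∈ Set.Ici (0 : ℝ), ∀ y ∈ Set.Ici (0 : ℝ), eval2 p x y = 0
  · refine ⟨0, 1, one_psd, fun x hx y hy => ?_, fun x hx => ?_⟩
    · simp [hA x hx y hy]
    · simp [eval2]
  push_neg at hA
  obtain ⟨x₀, hx₀, y₀, hy₀, hne⟩ := hA
  have hx₀x₀ : eval2 p x₀ x₀ ≠ 0 := by
    intro h
    have hcs := cs hp hx₀ hy₀
    rw [h, zero_mul] at hcs
    exact hne (pow_eq_zero_iff two_ne_zero |>.mp (le_antisymm hcs (sq_nonneg _)))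
  by_cases hB : ∃ a ∈ Set.Ici (0 : ℝ), eval2 p a a = 0
  · obtain ⟨a, ha, haa⟩ := hB
    have hvan : ∀ y ∈ Set.Ici (0 : ℝ), eval2 p a y = 0 := by
      intro y hy
      have hcs := cs hp ha hy
      rw [haa, zero_mul] at hcs
      exact pow_eq_zero_iff two_ne_zero |>.mp (le_antisymm hcs (sq_nonneg _))
    obtain ⟨r, hev, hdiag⟩ := divide hp ha hvan
    -- symmetry of r away from a
    have hroff : ∀ x, 0 ≤ x → ∀ y, 0 ≤ y → x ≠ a → y ≠ a →
        eval2 r x y = eval2 r y x := by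
      intro x hx y hy hxa hya
      have h1 := hev x y
      have h2 := hev y x
      have hsym := hp.1 x hx y hy
      have h3 : (x - a) * (y - a) * eval2 r x y = (x - a) * (y - a) * eval2 r y x := by
        rw [← h1, hsym, h2]; ring
      exact mul_left_cancel₀
        (mul_ne_zero (sub_ne_zero.mpr hxa) (sub_ne_zero.mpr hya)) h3
    -- full symmetry of r on the nonnegative quadrant
    have hrsym : ∀ x ∈ Set.Ici (0 : ℝ), ∀ y ∈ Set.Ici (0 : ℝ),
        eval2 r x y = eval2 r y x := by
      intro x hx y hy
      have hc : Continuous fun s =>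
          eval2 r (pert a x s) (pert a y s) - eval2 r (pert a y s) (pert a x s) :=
        (cont2 r (pert_cont a x) (pert_cont a y)).sub
          (cont2 r (pert_cont a y) (pert_cont a x))
      have h0 := zero_at_zero hc fun s hs => by
        have := hroff (pert a x s) (pert_nonneg hx hs.le) (pert a y s)
          (pert_nonneg hy hs.le) (pert_ne a x hs) (pert_ne a y hs)
        simp [this]
      simp only [pert_zero] at h0
      linarith [h0]
    -- positive semidefiniteness of r
    have hrq : ∀ (m : ℕ) (z : Fin m → ℝ), (∀ i, 0 ≤ z i) → ∀ c : Fin m → ℝ,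
        0 ≤ ∑ i, ∑ j, c i * c j * eval2 r (z i) (z j) := by
      intro m z hz c
      have hgc : Continuous fun s =>
          ∑ i, ∑ j, c i * c j * eval2 r (pert a (z i) s) (pert a (z j) s) := by
        refine continuous_finset_sum _ fun i _ => continuous_finset_sum _ fun j _ => ?_
        exact continuous_const.mul (cont2 r (pert_cont a (z i)) (pert_cont a (z j)))
      have hgpos : ∀ s, 0 < s →
          0 ≤ ∑ i, ∑ j, c i * c j * eval2 r (pert a (z i) s) (pert a (z j) s) := by
        intro s hs
        have hkey : ∀ i j : Fin m, c i * c j * eval2 r (pert a (z i) s) (pert a (z j) s) =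
            (c i / (pert a (z i) s - a)) * (c j / (pert a (z j) s - a)) *
              eval2 p (pert a (z i) s) (pert a (z j) s) := by
          intro i j
          have h1 := hev (pert a (z i) s) (pert a (z j) s)
          have hi : pert a (z i) s - a ≠ 0 := sub_ne_zero.mpr (pert_ne a _ hs)
          have hj : pert a (z j) s - a ≠ 0 := sub_ne_zero.mpr (pert_ne a _ hs)
          rw [h1]
          field_simp
        simp only [hkey]
        exact quadform_nonneg hp (fun i => pert a (z i) s)
          (fun i => pert_nonneg (hz i) hs.le) _
      have := nonneg_at_zero hgc hgpos
      simpa only [pert_zero] using this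
    have hr_psd : IsSymmPSDPoly r := isSymmPSD_of hrsym hrq
    -- degree bookkeeping
    have hdp : diag p ≠ 0 := by
      intro h
      have := diag_eval p x₀
      rw [h] at this
      simp at this
      exact hx₀x₀ this.symm
    have hdr : diag r ≠ 0 := by
      intro h
      rw [h, mul_zero] at hdiag
      exact hdp hdiag
    have hdeg2 : (diag r).natDegree < n := by
      have hXsC : ((Polynomial.X - Polynomial.C a : Polynomial ℝ) ^ 2) ≠ 0 :=
        pow_ne_zero 2 (Polynomial.X_sub_C_ne_zero a)
      have hnd := Polynomial.natDegree_mul hXsC hdr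
      rw [← hdiag] at hnd
      have h2 : ((Polynomial.X - Polynomial.C a : Polynomial ℝ) ^ 2).natDegree = 2 := by
        rw [Polynomial.natDegree_pow, Polynomial.natDegree_X_sub_C]
      rw [h2] at hnd
      omega
    obtain ⟨q', r', hr', hfac, hpos⟩ := IH (diag r).natDegree hdeg2 r hr_psd le_rfl
    refine ⟨(Polynomial.X - Polynomial.C a) * q', r', hr', ?_, hpos⟩
    intro x hx y hy
    rw [hev x y, hfac x hx y hy]
    simp only [Polynomial.eval_mul, Polynomial.eval_sub, Polynomial.eval_X,
      Polynomial.eval_C]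
    ring
  · push_neg at hB
    refine ⟨1, p, hp, fun x hx y hy => by simp, fun x hx => ?_⟩
    exact lt_of_le_of_ne (diag_nonneg hp hx) (Ne.symm (hB x hx))

end SymmPSD

theorem symm_psd_poly_factorization
    (p : MvPolynomial (Fin 2) ℝ) (hp : IsSymmPSDPoly p) :
    ∃ (q : Polynomial ℝ) (r : MvPolynomial (Fin 2) ℝ),
      IsSymmPSDPoly r ∧
      (∀ x ∈ Set.Ici (0 : ℝ), ∀ y ∈ Set.Ici (0 : ℝ),
        eval2 p x y = q.eval x * q.eval y * eval2 r x y) ∧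
      (∀ x ∈ Set.Ici (0 : ℝ), 0 < eval2 r x x) :=
  SymmPSD.key (SymmPSD.diag p).natDegree p hp le_rfl
end

section
/- Let k, l ∈ ℕ₀ and λ, μ ∈ ℝ. Then the function z ↦ z^k·e^{λz}·conj(z^l·e^{μz})·e^{−|z|²} is Lebesgue integrable on ℂ and (1/π)·∫_ℂ z^k·e^{λz}·conj(z^l·e^{μz})·e^{−|z|²} dA(z) = ∂_λ^k ∂_μ^l e^{λμ}, i.e. the integral equals the k-th partial derivative in λ and l-th partial derivative in μ of the function (λ,μ) ↦ e^{λμ}. -/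
open MeasureTheory Real Complex Metric

/-!
STATEMENT 10: For `k, l ∈ ℕ₀` and `λ, μ ∈ ℝ`, the function
`z ↦ z^k e^{λ z} · conj (z^l e^{μ z}) · e^{−|z|²}` is Lebesgue integrable on `ℂ`
and `(1/π) ∫_ℂ z^k e^{λ z} conj (z^l e^{μ z}) e^{−|z|²} dA(z) = ∂_λ^k ∂_μ^l e^{λ μ}`,
the iterated partial derivative of the smooth function `(λ, μ) ↦ e^{λ μ}` on `ℝ²`.

`dA` is two-dimensional Lebesgue measure on `ℂ ≅ ℝ²`, which is `volume` on `ℂ`.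
-/

/-! ### Auxiliary definitions and lemmas -/

noncomputable def bmeip_igd (k l : ℕ) (a b : ℝ) (z : ℂ) : ℂ :=
  z^k * (starRingEnd ℂ z)^l * Complex.exp (a*z + b*(starRingEnd ℂ z) - (‖z‖:ℂ)^2)

lemma bmeip_norm_sq_complex (z : ℂ) : ‖z‖^2 = z.re^2 + z.im^2 := by
  rw [Complex.sq_norm, Complex.normSq_apply]; ring

lemma bmeip_pow_exp_quarter_bound (n : ℕ) (x : ℝ) (hx : 0 ≤ x) :
    x^n * Real.exp (-(1/4) * x^2) ≤ 1 + 4^n * n.factorial := by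
  have hpow : x^n ≤ 1 + x^(2*n) := by
    rcases le_total x 1 with h | h
    · have h1 : x^n ≤ 1 := pow_le_one₀ hx h
      have h2 : (0:ℝ) ≤ x^(2*n) := pow_nonneg hx _
      linarith
    · have h1 : x^n ≤ x^(2*n) := pow_le_pow_right₀ h (by omega)
      linarith
  have hfac : (0:ℝ) < n.factorial := by positivity
  have hterm : (x^2/4)^n / n.factorial ≤ Real.exp (x^2/4) := by
    calc (x^2/4)^n / n.factorial ≤ ∑ i ∈ Finset.range (n+1), (x^2/4) ^ i / i.factorial :=
          Finset.single_le_sum (f := fun i => (x^2/4)^i / (i.factorial:ℝ))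
            (fun i _ => by positivity) (Finset.self_mem_range_succ n)
      _ ≤ Real.exp (x^2/4) := Real.sum_le_exp_of_nonneg (by positivity) _
  have h2n : x^(2*n) ≤ 4^n * n.factorial * Real.exp (x^2/4) := by
    have heq : x^(2*n) = 4^n * (x^2/4)^n := by
      rw [pow_mul, div_pow]
      field_simp
    rw [heq]
    have := (div_le_iff₀ hfac).mp hterm
    calc (4:ℝ)^n * (x^2/4)^n ≤ 4^n * (Real.exp (x^2/4) * n.factorial) := by
          apply mul_le_mul_of_nonneg_left this (by positivity)
      _ = 4^n * n.factorial * Real.exp (x^2/4) := by ring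
  have hE : Real.exp (-(1/4) * x^2) = (Real.exp (x^2/4))⁻¹ := by
    rw [← Real.exp_neg]; ring_nf
  have hEpos : (0:ℝ) < Real.exp (x^2/4) := Real.exp_pos _
  calc x^n * Real.exp (-(1/4) * x^2) ≤ (1 + x^(2*n)) * Real.exp (-(1/4)*x^2) := by
        apply mul_le_mul_of_nonneg_right hpow (Real.exp_pos _).le
    _ ≤ (1 + 4^n * n.factorial * Real.exp (x^2/4)) * (Real.exp (x^2/4))⁻¹ := by
        rw [hE]
        apply mul_le_mul_of_nonneg_right (by linarith) (by positivity)
    _ = (Real.exp (x^2/4))⁻¹ + 4^n * n.factorial := by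
        field_simp
    _ ≤ 1 + 4^n * n.factorial := by
        have : (Real.exp (x^2/4))⁻¹ ≤ 1 := by
          rw [inv_le_one_iff₀]; right; exact Real.one_le_exp (by positivity)
        linarith

lemma bmeip_exp_bound_aux (n : ℕ) (c : ℝ) (x : ℝ) (hx : 0 ≤ x) :
    x^n * Real.exp (c * x - x^2) ≤
      ((1 + 4^n * n.factorial) * Real.exp (c^2)) * Real.exp (-(1/2) * x^2) := by
  have key : c * x - x^2 = (-(1/4)*x^2) + (c*x - (1/4)*x^2) + (-(1/2)*x^2) := by ring
  have h1 : c*x - (1/4)*x^2 ≤ c^2 := by nlinarith [sq_nonneg (x/2 - c)]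
  rw [key, Real.exp_add, Real.exp_add, ← mul_assoc]
  have := bmeip_pow_exp_quarter_bound n x hx
  calc x ^ n * (Real.exp (-(1/4)*x^2) * Real.exp (c*x - (1/4)*x^2)) * Real.exp (-(1/2)*x^2)
      ≤ ((1 + 4^n * n.factorial) * Real.exp (c^2)) * Real.exp (-(1/2)*x^2) := by
        apply mul_le_mul_of_nonneg_right _ (Real.exp_pos _).le
        rw [← mul_assoc]
        apply mul_le_mul this (Real.exp_le_exp.mpr h1) (Real.exp_pos _).le (by positivity)

lemma bmeip_integrable_gauss_half :
    Integrable (fun z : ℂ => Real.exp (-(1/2) * ‖z‖^2)) (volume : Measure ℂ) := by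
  have h := Complex.volume_preserving_equiv_real_prod.symm
  rw [← h.integrable_comp_emb Complex.measurableEquivRealProd.symm.measurableEmbedding]
  have : ((fun z : ℂ => Real.exp (-(1/2) * ‖z‖^2)) ∘ Complex.measurableEquivRealProd.symm)
      = fun p : ℝ × ℝ => Real.exp (-(1/2) * p.1^2) * Real.exp (-(1/2) * p.2^2) := by
    funext p
    simp only [Function.comp_apply, Complex.measurableEquivRealProd_symm_apply,
      bmeip_norm_sq_complex]
    rw [← Real.exp_add]
    norm_num
    ring_nf
  rw [this]
  exact (integrable_exp_neg_mul_sq (by norm_num : (0:ℝ) < 1/2)).mul_prod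
    (integrable_exp_neg_mul_sq (by norm_num : (0:ℝ) < 1/2))

lemma bmeip_integrable_aux (n : ℕ) (c : ℝ) :
    Integrable (fun z : ℂ => ‖z‖^n * Real.exp (c * ‖z‖ - ‖z‖^2)) (volume : Measure ℂ) := by
  apply (bmeip_integrable_gauss_half.const_mul
    ((1 + 4^n * n.factorial) * Real.exp (c^2))).mono'
  · apply Continuous.aestronglyMeasurable
    fun_prop
  · filter_upwards with z
    rw [Real.norm_eq_abs, _root_.abs_of_nonneg (by positivity)]
    exact bmeip_exp_bound_aux n c ‖z‖ (norm_nonneg z)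

lemma bmeip_cont (k l : ℕ) (lam mu : ℝ) : Continuous (bmeip_igd k l lam mu) := by
  unfold bmeip_igd
  exact ((continuous_pow k).mul ((Complex.continuous_conj).pow l)).mul
    (Complex.continuous_exp.comp (((continuous_const.mul continuous_id).add
      (continuous_const.mul Complex.continuous_conj)).sub
      ((Complex.continuous_ofReal.comp continuous_norm).pow 2)))

lemma bmeip_norm_le (k l : ℕ) (a b : ℝ) (c : ℝ) (hab : |a| + |b| ≤ c) (z : ℂ) :
    ‖bmeip_igd k l a b z‖ ≤ ‖z‖^(k+l) * Real.exp (c * ‖z‖ - ‖z‖^2) := by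
  unfold bmeip_igd
  have hre : ((a:ℂ)*z + (b:ℂ)*(starRingEnd ℂ z) - (‖z‖:ℂ)^2).re
      = a * z.re + b * z.re - ‖z‖^2 := by
    simp [Complex.add_re, Complex.sub_re, Complex.mul_re, ← Complex.ofReal_pow]
  rw [norm_mul, norm_mul, norm_pow, norm_pow, RCLike.norm_conj,
    Complex.norm_exp, hre, ← pow_add]
  apply mul_le_mul_of_nonneg_left _ (by positivity)
  apply Real.exp_le_exp.mpr
  have h1 : |z.re| ≤ ‖z‖ := by exact Complex.abs_re_le_norm z
  have h2 : a * z.re ≤ |a| * ‖z‖ := by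
    calc a * z.re ≤ |a * z.re| := le_abs_self _
      _ = |a| * |z.re| := abs_mul _ _
      _ ≤ |a| * ‖z‖ := mul_le_mul_of_nonneg_left h1 (abs_nonneg _)
  have h3 : b * z.re ≤ |b| * ‖z‖ := by
    calc b * z.re ≤ |b * z.re| := le_abs_self _
      _ = |b| * |z.re| := abs_mul _ _
      _ ≤ |b| * ‖z‖ := mul_le_mul_of_nonneg_left h1 (abs_nonneg _)
  nlinarith [norm_nonneg z]

lemma bmeip_integrable (k l : ℕ) (lam mu : ℝ) :
    Integrable (bmeip_igd k l lam mu) (volume : Measure ℂ) := by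
  apply (bmeip_integrable_aux (k+l) (|lam|+|mu|)).mono'
    (bmeip_cont k l lam mu).aestronglyMeasurable
  filter_upwards with z
  exact bmeip_norm_le k l lam mu _ le_rfl z

lemma bmeip_hasDerivAt_lam (k l : ℕ) (mu lam : ℝ) :
    HasDerivAt (fun a : ℝ => ∫ z : ℂ, bmeip_igd k l a mu z)
      (∫ z : ℂ, bmeip_igd (k+1) l lam mu z) lam := by
  have key := hasDerivAt_integral_of_dominated_loc_of_deriv_le (μ := (volume : Measure ℂ))
    (F := fun (a : ℝ) (z : ℂ) => bmeip_igd k l a mu z)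
    (F' := fun (a : ℝ) (z : ℂ) => bmeip_igd (k+1) l a mu z)
    (x₀ := lam) (s := ball lam 1)
    (bound := fun z : ℂ => ‖z‖^(k+1+l) * Real.exp ((|lam| + 1 + |mu|) * ‖z‖ - ‖z‖^2))
    (ball_mem_nhds lam one_pos)
    (Filter.Eventually.of_forall fun a => (bmeip_cont k l a mu).aestronglyMeasurable)
    (bmeip_integrable k l lam mu)
    ((bmeip_cont (k+1) l lam mu).aestronglyMeasurable)
    ?_ (bmeip_integrable_aux (k+1+l) (|lam| + 1 + |mu|)) ?_
  · exact key.2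
  · filter_upwards with z a ha
    have haa : |a| ≤ |lam| + 1 := by
      have := mem_ball_iff_norm.mp ha
      rw [Real.norm_eq_abs] at this
      calc |a| = |lam + (a - lam)| := by ring_nf
        _ ≤ |lam| + |a - lam| := abs_add_le _ _
        _ ≤ |lam| + 1 := by linarith
    exact bmeip_norm_le (k+1) l a mu _ (by linarith [abs_nonneg mu]) z
  · filter_upwards with z a _
    unfold bmeip_igd
    have hc : HasDerivAt (fun w : ℂ => z^k * (starRingEnd ℂ z)^l *
        Complex.exp (w*z + mu*(starRingEnd ℂ z) - (‖z‖:ℂ)^2))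
        (z^k * (starRingEnd ℂ z)^l *
          (Complex.exp ((a:ℂ)*z + mu*(starRingEnd ℂ z) - (‖z‖:ℂ)^2) * z)) (a:ℂ) := by
      have h1 : HasDerivAt (fun w : ℂ => w*z + mu*(starRingEnd ℂ z) - (‖z‖:ℂ)^2)
          z (a:ℂ) := by
        simpa only [id_eq, one_mul] using (((hasDerivAt_id (a:ℂ)).mul_const z).add_const
          ((mu:ℂ)*(starRingEnd ℂ z))).sub_const ((‖z‖:ℂ)^2)
      exact (h1.cexp).const_mul _
    have := hc.comp_ofReal
    exact this.congr_deriv (by ring)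

lemma bmeip_hasDerivAt_mu (k l : ℕ) (lam mu : ℝ) :
    HasDerivAt (fun b : ℝ => ∫ z : ℂ, bmeip_igd k l lam b z)
      (∫ z : ℂ, bmeip_igd k (l+1) lam mu z) mu := by
  have key := hasDerivAt_integral_of_dominated_loc_of_deriv_le (μ := (volume : Measure ℂ))
    (F := fun (b : ℝ) (z : ℂ) => bmeip_igd k l lam b z)
    (F' := fun (b : ℝ) (z : ℂ) => bmeip_igd k (l+1) lam b z)
    (x₀ := mu) (s := ball mu 1)
    (bound := fun z : ℂ => ‖z‖^(k+(l+1)) * Real.exp ((|lam| + 1 + |mu|) * ‖z‖ - ‖z‖^2))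
    (ball_mem_nhds mu one_pos)
    (Filter.Eventually.of_forall fun b => (bmeip_cont k l lam b).aestronglyMeasurable)
    (bmeip_integrable k l lam mu)
    ((bmeip_cont k (l+1) lam mu).aestronglyMeasurable)
    ?_ (bmeip_integrable_aux (k+(l+1)) (|lam| + 1 + |mu|)) ?_
  · exact key.2
  · filter_upwards with z b hb
    have hbb : |b| ≤ |mu| + 1 := by
      have := mem_ball_iff_norm.mp hb
      rw [Real.norm_eq_abs] at this
      calc |b| = |mu + (b - mu)| := by ring_nf
        _ ≤ |mu| + |b - mu| := abs_add_le _ _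
        _ ≤ |mu| + 1 := by linarith
    exact bmeip_norm_le k (l+1) lam b _ (by linarith) z
  · filter_upwards with z b _
    unfold bmeip_igd
    have hc : HasDerivAt (fun w : ℂ => z^k * (starRingEnd ℂ z)^l *
        Complex.exp (lam*z + w*(starRingEnd ℂ z) - (‖z‖:ℂ)^2))
        (z^k * (starRingEnd ℂ z)^l *
          (Complex.exp ((lam:ℂ)*z + (b:ℂ)*(starRingEnd ℂ z) - (‖z‖:ℂ)^2)
            * (starRingEnd ℂ z))) (b:ℂ) := by
      have h1 : HasDerivAt (fun w : ℂ => (lam:ℂ)*z + w*(starRingEnd ℂ z) - (‖z‖:ℂ)^2)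
          (starRingEnd ℂ z) (b:ℂ) := by
        simpa only [id_eq, one_mul] using ((((hasDerivAt_id (b:ℂ)).mul_const
          (starRingEnd ℂ z)).const_add ((lam:ℂ)*z)).sub_const ((‖z‖:ℂ)^2))
      exact (h1.cexp).const_mul _
    have := hc.comp_ofReal
    exact this.congr_deriv (by ring)

lemma bmeip_base_integral (lam mu : ℝ) :
    ∫ z : ℂ, bmeip_igd 0 0 lam mu z = (π : ℂ) * Complex.exp (lam*mu) := by
  have higd : bmeip_igd 0 0 lam mu
      = fun z : ℂ => Complex.exp (lam*z + mu*(starRingEnd ℂ z) - (‖z‖:ℂ)^2) := by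
    funext z; unfold bmeip_igd; simp
  rw [higd,
    ← (Complex.volume_preserving_equiv_real_prod.symm).integral_comp
    Complex.measurableEquivRealProd.symm.measurableEmbedding]
  have hfun : ∀ p : ℝ × ℝ,
      Complex.exp (lam*(Complex.measurableEquivRealProd.symm p)
        + mu*(starRingEnd ℂ (Complex.measurableEquivRealProd.symm p))
        - ((‖(Complex.measurableEquivRealProd.symm p : ℂ)‖:ℝ):ℂ)^2)
      = Complex.exp (-1*(p.1:ℂ)^2 + ((lam+mu : ℝ):ℂ)*(p.1:ℂ) + 0)
        * Complex.exp (-1*(p.2:ℂ)^2 + (((lam-mu : ℝ):ℂ)*Complex.I)*(p.2:ℂ) + 0) := by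
    intro p
    rw [← Complex.exp_add]
    congr 1
    rw [Complex.measurableEquivRealProd_symm_apply, Complex.mk_eq_add_mul_I]
    have hn : (((‖((p.1:ℂ) + (p.2:ℂ)*Complex.I)‖:ℝ)):ℂ)^2 = (p.1:ℂ)^2 + (p.2:ℂ)^2 := by
      rw [← Complex.ofReal_pow, bmeip_norm_sq_complex]
      push_cast
      simp
    have hc : (starRingEnd ℂ) ((p.1:ℂ) + (p.2:ℂ)*Complex.I) = (p.1:ℂ) - (p.2:ℂ)*Complex.I := by
      simp [map_add, map_mul, Complex.conj_I]
      ring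
    rw [hc, hn]
    push_cast
    ring
  rw [MeasureTheory.integral_congr_ae (Filter.Eventually.of_forall hfun),
    MeasureTheory.Measure.volume_eq_prod,
    MeasureTheory.integral_prod_mul (μ := (volume : Measure ℝ)) (ν := (volume : Measure ℝ))
      (f := fun x : ℝ => Complex.exp (-1*(x:ℂ)^2 + ((lam+mu : ℝ):ℂ)*(x:ℂ) + 0))
      (g := fun y : ℝ => Complex.exp (-1*(y:ℂ)^2 + (((lam-mu : ℝ):ℂ)*Complex.I)*(y:ℂ) + 0)),
    integral_cexp_quadratic (by norm_num : ((-1:ℂ)).re < 0),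
    integral_cexp_quadratic (by norm_num : ((-1:ℂ)).re < 0)]
  have hpi : ((π:ℂ) / -(-1)) ^ (1/2 : ℂ) * ((π:ℂ) / -(-1)) ^ (1/2 : ℂ) = (π:ℂ) := by
    rw [← Complex.cpow_add _ _ (by norm_num)]
    norm_num
  have hexp : Complex.exp (0 - ((lam+mu:ℝ):ℂ)^2/(4*(-1)))
      * Complex.exp (0 - (((lam-mu:ℝ):ℂ)*Complex.I)^2/(4*(-1))) = Complex.exp (lam*mu) := by
    rw [← Complex.exp_add]
    congr 1
    push_cast
    ring_nf
    rw [Complex.I_sq]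
    ring
  rw [mul_mul_mul_comm, hpi, hexp]

lemma bmeip_int_zero (l : ℕ) (lam : ℝ) : ∀ mu : ℝ,
    ∫ z : ℂ, bmeip_igd 0 l lam mu z = (π:ℂ) * (lam:ℂ)^l * Complex.exp (lam*mu) := by
  induction l with
  | zero =>
    intro mu
    rw [bmeip_base_integral lam mu]
    simp
  | succ n ih =>
    intro mu
    have hd : HasDerivAt (fun b : ℝ => ∫ z : ℂ, bmeip_igd 0 n lam b z)
        (∫ z : ℂ, bmeip_igd 0 (n+1) lam mu z) mu := bmeip_hasDerivAt_mu 0 n lam mu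
    have hfe : (fun b : ℝ => ∫ z : ℂ, bmeip_igd 0 n lam b z)
        = fun b : ℝ => (π:ℂ) * (lam:ℂ)^n * Complex.exp (lam*b) := funext ih
    rw [hfe] at hd
    have hd2 : HasDerivAt (fun b : ℝ => (π:ℂ) * (lam:ℂ)^n * Complex.exp ((lam:ℂ)*b))
        ((π:ℂ) * (lam:ℂ)^(n+1) * Complex.exp ((lam:ℂ)*mu)) mu := by
      have hi : HasDerivAt (fun w : ℂ => Complex.exp ((lam:ℂ)*w))
          (Complex.exp ((lam:ℂ)*mu) * (lam:ℂ)) (mu:ℂ) := by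
        simpa only [id_eq, one_mul, mul_one] using ((hasDerivAt_id ((mu:ℝ):ℂ)).const_mul (lam:ℂ)).cexp
      have := (hi.const_mul ((π:ℂ) * (lam:ℂ)^n)).comp_ofReal
      convert this using 1
      ring
    exact hd.unique hd2

lemma bmeip_int_k (k l : ℕ) (mu : ℝ) : ∀ lam : ℝ,
    ∫ z : ℂ, bmeip_igd k l lam mu z
      = (π:ℂ) * iteratedDeriv k (fun a : ℝ => ((a:ℝ):ℂ)^l * Complex.exp ((a:ℂ)*mu)) lam := by
  induction k with
  | zero =>
    intro lam
    rw [iteratedDeriv_zero, bmeip_int_zero l lam mu]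
    ring
  | succ n ih =>
    intro lam
    have hd : HasDerivAt (fun a : ℝ => ∫ z : ℂ, bmeip_igd n l a mu z)
        (∫ z : ℂ, bmeip_igd (n+1) l lam mu z) lam := bmeip_hasDerivAt_lam n l mu lam
    have hfe : (fun a : ℝ => ∫ z : ℂ, bmeip_igd n l a mu z)
        = fun a : ℝ => (π:ℂ) * iteratedDeriv n (fun t : ℝ => ((t:ℝ):ℂ)^l
            * Complex.exp ((t:ℂ)*mu)) a := funext ih
    rw [hfe] at hd
    have hpi : (π:ℂ) ≠ 0 := Complex.ofReal_ne_zero.mpr Real.pi_ne_zero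
    have hd2 : HasDerivAt (fun a : ℝ => iteratedDeriv n (fun t : ℝ => ((t:ℝ):ℂ)^l
        * Complex.exp ((t:ℂ)*mu)) a)
        ((π:ℂ)⁻¹ * ∫ z : ℂ, bmeip_igd (n+1) l lam mu z) lam := by
      have := hd.const_mul ((π:ℂ)⁻¹)
      have heq : (fun a : ℝ => (π:ℂ)⁻¹ * ((π:ℂ) * iteratedDeriv n (fun t : ℝ => ((t:ℝ):ℂ)^l
          * Complex.exp ((t:ℂ)*mu)) a))
          = fun a : ℝ => iteratedDeriv n (fun t : ℝ => ((t:ℝ):ℂ)^l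
            * Complex.exp ((t:ℂ)*mu)) a := by
        funext a
        rw [← mul_assoc, inv_mul_cancel₀ hpi, one_mul]
      rwa [heq] at this
    rw [iteratedDeriv_succ, hd2.deriv]
    field_simp

lemma bmeip_iteratedDeriv_exp_mul (a : ℝ) (l : ℕ) :
    ∀ mu : ℝ, iteratedDeriv l (fun b : ℝ => Real.exp (a*b)) mu = a^l * Real.exp (a*mu) := by
  induction l with
  | zero => intro mu; simp
  | succ n ih =>
    intro mu
    rw [iteratedDeriv_succ]
    have hfe : iteratedDeriv n (fun b : ℝ => Real.exp (a*b)) = fun b => a^n * Real.exp (a*b) :=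
      funext ih
    rw [hfe]
    have hd : HasDerivAt (fun b : ℝ => a^n * Real.exp (a*b)) (a^(n+1) * Real.exp (a*mu)) mu := by
      have h0 : HasDerivAt (fun b : ℝ => Real.exp (a*b)) (Real.exp (a*mu) * a) mu := by
        simpa using ((hasDerivAt_id mu).const_mul a).exp
      have h1 := h0.const_mul (a^n)
      exact h1.congr_deriv (by ring)
    exact hd.deriv

lemma bmeip_iteratedDeriv_ofReal (g : ℝ → ℝ) (hg : ContDiff ℝ ((⊤:ℕ∞):WithTop ℕ∞) g) (n : ℕ) :
    ∀ x : ℝ, iteratedDeriv n (fun t : ℝ => ((g t : ℝ) : ℂ)) x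
      = ((iteratedDeriv n g x : ℝ) : ℂ) := by
  induction n generalizing g with
  | zero => intro x; simp
  | succ m ih =>
    intro x
    rw [iteratedDeriv_succ', iteratedDeriv_succ']
    have hderiv : (deriv fun t : ℝ => ((g t : ℝ) : ℂ)) = fun t => ((deriv g t : ℝ) : ℂ) := by
      funext t
      exact (((hg.differentiable (by simp)).differentiableAt.hasDerivAt).ofReal_comp).deriv
    rw [hderiv]
    exact ih (deriv g) (contDiff_infty_iff_deriv.mp hg).2 x

theorem bargmann_monomial_exponential_inner_product
    (k l : ℕ) (lam mu : ℝ) :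
    Integrable
        (fun z : ℂ => z ^ k * Complex.exp ((lam : ℂ) * z) *
          (starRingEnd ℂ) (z ^ l * Complex.exp ((mu : ℂ) * z)) *
          (Real.exp (-‖z‖ ^ 2) : ℂ))
        (volume : Measure ℂ) ∧
    (1 / (Real.pi : ℂ)) *
        ∫ z : ℂ, z ^ k * Complex.exp ((lam : ℂ) * z) *
          (starRingEnd ℂ) (z ^ l * Complex.exp ((mu : ℂ) * z)) *
          (Real.exp (-‖z‖ ^ 2) : ℂ)
      = ((iteratedDeriv k
            (fun a : ℝ => iteratedDeriv l (fun b : ℝ => Real.exp (a * b)) mu)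
            lam : ℝ) : ℂ) := by
  have higd : (fun z : ℂ => z ^ k * Complex.exp ((lam : ℂ) * z) *
      (starRingEnd ℂ) (z ^ l * Complex.exp ((mu : ℂ) * z)) *
      (Real.exp (-‖z‖ ^ 2) : ℂ)) = bmeip_igd k l lam mu := by
    funext z
    unfold bmeip_igd
    have e1 : Complex.exp ((lam:ℂ)*z + (mu:ℂ)*(starRingEnd ℂ z) - (‖z‖:ℂ)^2)
        = Complex.exp ((lam:ℂ)*z) * Complex.exp ((mu:ℂ)*(starRingEnd ℂ z))
          * Complex.exp (-(‖z‖:ℂ)^2) := by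
      rw [← Complex.exp_add, ← Complex.exp_add, sub_eq_add_neg]
    rw [e1, map_mul, map_pow, ← Complex.exp_conj, map_mul, Complex.conj_ofReal,
      Complex.ofReal_exp, Complex.ofReal_neg, Complex.ofReal_pow]
    ring
  have hpi : (π:ℂ) ≠ 0 := Complex.ofReal_ne_zero.mpr Real.pi_ne_zero
  constructor
  · rw [higd]; exact bmeip_integrable k l lam mu
  · rw [higd, bmeip_int_k k l mu lam]
    have hg : ContDiff ℝ ((⊤:ℕ∞):WithTop ℕ∞) (fun a : ℝ => a^l * Real.exp (a*mu)) := by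
      apply ContDiff.mul
      · exact contDiff_id.pow l
      · exact Real.contDiff_exp.comp (contDiff_id.mul contDiff_const)
    have hinner : (fun a : ℝ => iteratedDeriv l (fun b : ℝ => Real.exp (a * b)) mu)
        = fun a : ℝ => a^l * Real.exp (a*mu) := by
      funext a
      exact bmeip_iteratedDeriv_exp_mul a l mu
    rw [hinner]
    have hofr : (fun t : ℝ => ((t:ℝ):ℂ)^l * Complex.exp ((t:ℂ)*mu))
        = fun t : ℝ => (((t^l * Real.exp (t*mu) : ℝ)):ℂ) := by
      funext t
      push_cast [Complex.ofReal_exp]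
      ring
    rw [hofr, bmeip_iteratedDeriv_ofReal _ hg k lam]
    rw [one_div, ← mul_assoc, inv_mul_cancel₀ hpi, one_mul]
end

section
/- Let K ∈ ℝ^{N×N} be symmetric positive semidefinite, let C ∈ ℝ^{M×N}, let I₁ ⊆ {1,…,M} and let Λ ∈ ℝ^{M×M} be the diagonal matrix with Λ_{ii} > 0 for i ∉ I₁ and Λ_{ii} = 0 for i ∈ I₁. Assume that either I₁ = ∅ or the matrix C_{I₁}·K·C_{I₁}ᵀ is invertible, where C_{I₁} denotes the submatrix of C consisting of the rows indexed by I₁. Then the matrix C·K·Cᵀ + Λ is invertible. -/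
open Matrix

/-!
STATEMENT 14: Let `K ∈ ℝ^{N×N}` be symmetric positive semidefinite, `C ∈ ℝ^{M×N}`,
`I₁ ⊆ {1,…,M}`, and let `Λ` be the diagonal matrix with `Λᵢᵢ > 0` for `i ∉ I₁`
and `Λᵢᵢ = 0` for `i ∈ I₁`.  If either `I₁ = ∅` or `C_{I₁} K C_{I₁}ᵀ` is
invertible (where `C_{I₁}` is the submatrix of rows indexed by `I₁`), then
`C K Cᵀ + Λ` is invertible.
-/

theorem ridge_matrix_invertible
    (N M : ℕ) (K : Matrix (Fin N) (Fin N) ℝ) (hK : K.PosSemidef)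
    (C : Matrix (Fin M) (Fin N) ℝ)
    (I₁ : Finset (Fin M)) (lam : Fin M → ℝ)
    (hlam_pos : ∀ i ∉ I₁, 0 < lam i) (hlam_zero : ∀ i ∈ I₁, lam i = 0)
    (hinv : I₁ = ∅ ∨
      IsUnit ((C.submatrix (fun i : I₁ => (i : Fin M)) id * K *
        (C.submatrix (fun i : I₁ => (i : Fin M)) id)ᵀ).det)) :
    IsUnit ((C * K * Cᵀ + Matrix.diagonal lam).det) := by
  rw [isUnit_iff_ne_zero]
  intro hdet
  obtain ⟨v, hv0, hv⟩ := (Matrix.exists_mulVec_eq_zero_iff).mpr hdet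
  -- positivity of the two summands
  have hA₁ : (C * K * Cᵀ).PosSemidef := by
    have := hK.mul_mul_conjTranspose_same C
    simpa [Matrix.conjTranspose_eq_transpose_of_trivial] using this
  have hlam_nonneg : ∀ i, 0 ≤ lam i := by
    intro i
    by_cases hi : i ∈ I₁
    · exact le_of_eq (hlam_zero i hi).symm
    · exact (hlam_pos i hi).le
  have hD : (Matrix.diagonal lam).PosSemidef := Matrix.PosSemidef.diagonal hlam_nonneg
  have hq : v ⬝ᵥ (C * K * Cᵀ) *ᵥ v + v ⬝ᵥ (Matrix.diagonal lam) *ᵥ v = 0 := by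
    have : v ⬝ᵥ (C * K * Cᵀ + Matrix.diagonal lam) *ᵥ v = 0 := by
      rw [hv, dotProduct_zero]
    simpa [Matrix.add_mulVec, dotProduct_add] using this
  have h1 : 0 ≤ v ⬝ᵥ (C * K * Cᵀ) *ᵥ v := by simpa using hA₁.dotProduct_mulVec_nonneg v
  have h2 : 0 ≤ v ⬝ᵥ (Matrix.diagonal lam) *ᵥ v := by simpa using hD.dotProduct_mulVec_nonneg v
  have hq1 : v ⬝ᵥ (C * K * Cᵀ) *ᵥ v = 0 := by linarith
  have hq2 : v ⬝ᵥ (Matrix.diagonal lam) *ᵥ v = 0 := by linarith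
  -- v vanishes outside I₁
  have hDv : (Matrix.diagonal lam) *ᵥ v = 0 := by
    have := (hD.dotProduct_mulVec_zero_iff v).mp (by simpa using hq2)
    exact this
  have hv_out : ∀ i ∉ I₁, v i = 0 := by
    intro i hi
    have hdiag : lam i * v i = 0 := by
      have := congrFun hDv i
      simpa [Matrix.mulVec_diagonal] using this
    rcases mul_eq_zero.mp hdiag with h | h
    · exact absurd h (ne_of_gt (hlam_pos i hi))
    · exact h
  -- K (Cᵀ v) = 0
  have hKw : K *ᵥ (Cᵀ *ᵥ v) = 0 := by
    apply (hK.dotProduct_mulVec_zero_iff (Cᵀ *ᵥ v)).mp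
    have e1 : (C * K * Cᵀ) *ᵥ v = C *ᵥ (K *ᵥ (Cᵀ *ᵥ v)) := by
      rw [Matrix.mulVec_mulVec, Matrix.mulVec_mulVec]
    have key : v ⬝ᵥ (C * K * Cᵀ) *ᵥ v = (Cᵀ *ᵥ v) ⬝ᵥ K *ᵥ (Cᵀ *ᵥ v) := by
      rw [e1, Matrix.dotProduct_mulVec, ← Matrix.mulVec_transpose]
    rw [key] at hq1
    simpa using hq1
  rcases hinv with hempty | hBinv
  · -- I₁ empty: v = 0 everywhere
    apply hv0
    funext i
    exact hv_out i (by simp [hempty])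
  · -- I₁ nonempty: use invertibility of the submatrix
    set C₁ := C.submatrix (fun i : I₁ => (i : Fin M)) id with hC₁
    set u : I₁ → ℝ := fun j => v j with hu
    have hCtv : Cᵀ *ᵥ v = C₁ᵀ *ᵥ u := by
      funext n
      simp only [Matrix.mulVec, dotProduct, Matrix.transpose_apply, hC₁,
        Matrix.submatrix_apply, id_eq]
      show ∑ x : Fin M, C x n * v x = ∑ x : I₁, C (↑x) n * v ↑x
      rw [Finset.sum_coe_sort I₁ (fun i => C i n * v i)]
      symm
      apply Finset.sum_subset (Finset.subset_univ I₁)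
      intro i _ hi
      rw [hv_out i hi, mul_zero]
    have hBu : (C₁ * K * C₁ᵀ) *ᵥ u = 0 := by
      rw [← Matrix.mulVec_mulVec, ← Matrix.mulVec_mulVec, ← hCtv, hKw, Matrix.mulVec_zero]
    have hu0 : u = 0 := by
      by_contra hne
      have := (Matrix.exists_mulVec_eq_zero_iff).mp ⟨u, hne, hBu⟩
      rw [this] at hBinv
      exact (isUnit_iff_ne_zero.mp hBinv) rfl
    apply hv0
    funext i
    by_cases hi : i ∈ I₁
    · exact congrFun hu0 ⟨i, hi⟩
    · exact hv_out i hi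
end

section
/- Let K ∈ ℝ^{N×N} be symmetric positive semidefinite, C ∈ ℝ^{M×N}, P ∈ ℝ^M, λ > 0, and w₁,…,w_M > 0, and set Λ := diag(λ/w₁,…,λ/w_M). Then C·K·Cᵀ + Λ is invertible, and α := Cᵀ·(C·K·Cᵀ + Λ)⁻¹·P minimizes the function F(β) := Σ_{i=1}^{M} w_i·(P_i − (C·K·β)_i)² + λ·βᵀK·β over β ∈ ℝ^N; moreover, every minimizer β of F satisfies K·β = K·α. -/
open Matrix

/-!
STATEMENT 15: Let `K ∈ ℝ^{N×N}` be symmetric positive semidefinite,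
`C ∈ ℝ^{M×N}`, `P ∈ ℝ^M`, `λ > 0` and `w₁,…,w_M > 0`, and set
`Λ := diag (λ/w₁, …, λ/w_M)`.  Then `C K Cᵀ + Λ` is invertible, and
`α := Cᵀ (C K Cᵀ + Λ)⁻¹ P` minimizes
`F (β) := Σᵢ wᵢ (Pᵢ − (C K β)ᵢ)² + λ βᵀ K β` over `β ∈ ℝ^N`; moreover every
minimizer `β` of `F` satisfies `K β = K α`.
-/

theorem kernel_ridge_regression_minimizer
    (N M : ℕ) (K : Matrix (Fin N) (Fin N) ℝ) (hK : K.PosSemidef)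
    (C : Matrix (Fin M) (Fin N) ℝ) (P : Fin M → ℝ)
    (lam : ℝ) (hlam : 0 < lam) (w : Fin M → ℝ) (hw : ∀ i, 0 < w i)
    (Lam : Matrix (Fin M) (Fin M) ℝ)
    (hLam : Lam = Matrix.diagonal fun i => lam / w i)
    (F : (Fin N → ℝ) → ℝ)
    (hF : F = fun β => (∑ i, w i * (P i - (C * K).mulVec β i) ^ 2)
      + lam * dotProduct β (K.mulVec β))
    (α : Fin N → ℝ)
    (hα : α = Matrix.mulVec Cᵀ ((C * K * Cᵀ + Lam)⁻¹.mulVec P)) :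
    IsUnit ((C * K * Cᵀ + Lam).det) ∧
    (∀ β : Fin N → ℝ, F α ≤ F β) ∧
    (∀ β : Fin N → ℝ, F β = F α → K.mulVec β = K.mulVec α) := by
  have hKT : Kᵀ = K := by
    rw [← conjTranspose_eq_transpose_of_trivial]; exact hK.1
  have hCKC : (C * K * Cᵀ).PosSemidef := by
    have := hK.mul_mul_conjTranspose_same C
    rwa [conjTranspose_eq_transpose_of_trivial] at this
  have hD : Lam.PosDef := by
    rw [hLam]
    exact Matrix.posDef_diagonal_iff.mpr fun i => div_pos hlam (hw i)
  have hApd : (C * K * Cᵀ + Lam).PosDef := Matrix.PosDef.posSemidef_add hCKC hD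
  have hdet : IsUnit (C * K * Cᵀ + Lam).det := hApd.det_pos.ne'.isUnit
  set A := C * K * Cᵀ + Lam with hAdef
  set y : Fin M → ℝ := A⁻¹.mulVec P with hy
  -- α = Cᵀ *ᵥ y
  have hα' : α = Cᵀ.mulVec y := hα
  -- residual computation
  have hAy : A.mulVec y = P := by
    rw [hy, mulVec_mulVec, Matrix.mul_nonsing_inv A hdet, one_mulVec]
  have hs : (C * K).mulVec α = P - Lam.mulVec y := by
    rw [hα', mulVec_mulVec]
    have : C * K * Cᵀ = A - Lam := by rw [hAdef, add_sub_cancel_right]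
    rw [this, sub_mulVec, hAy]
  have hres : ∀ i, P i - (C * K).mulVec α i = lam / w i * y i := by
    intro i
    rw [hs, hLam]
    simp [mulVec_diagonal]
  -- symmetry of K
  have hsymm : ∀ x z : Fin N → ℝ, x ⬝ᵥ K.mulVec z = z ⬝ᵥ K.mulVec x := by
    intro x z
    rw [dotProduct_mulVec, ← mulVec_transpose, hKT, dotProduct_comm]
  -- cross term
  have hcross : ∀ δ : Fin N → ℝ,
      ∑ i, w i * (P i - (C * K).mulVec α i) * (C * K).mulVec δ i
        = lam * (δ ⬝ᵥ K.mulVec α) := by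
    intro δ
    have h1 : ∀ i, w i * (P i - (C * K).mulVec α i) = lam * y i := by
      intro i
      have hwi : w i ≠ 0 := (hw i).ne'
      rw [hres i]
      field_simp
    have h2 : ∑ i, w i * (P i - (C * K).mulVec α i) * (C * K).mulVec δ i
        = lam * (y ⬝ᵥ (C * K).mulVec δ) := by
      simp only [dotProduct, Finset.mul_sum]
      exact Finset.sum_congr rfl fun i _ => by rw [h1 i]; ring
    rw [h2]
    congr 1
    rw [dotProduct_mulVec, ← mulVec_transpose, transpose_mul, hKT,
      ← mulVec_mulVec, ← hα', dotProduct_comm]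
  -- key identity
  have key : ∀ β : Fin N → ℝ, F β = F α
      + (∑ i, w i * ((C * K).mulVec (β - α) i) ^ 2)
      + lam * ((β - α) ⬝ᵥ K.mulVec (β - α)) := by
    intro β
    have hv : ∀ i, (C * K).mulVec β i
        = (C * K).mulVec α i + (C * K).mulVec (β - α) i := by
      intro i
      rw [mulVec_sub]
      simp
    have hterm : ∀ i, w i * (P i - (C * K).mulVec β i) ^ 2
        = w i * (P i - (C * K).mulVec α i) ^ 2
          + w i * ((C * K).mulVec (β - α) i) ^ 2
          - 2 * (w i * (P i - (C * K).mulVec α i) * (C * K).mulVec (β - α) i) := by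
      intro i; rw [hv i]; ring
    have hquad : β ⬝ᵥ K.mulVec β = α ⬝ᵥ K.mulVec α
        + 2 * ((β - α) ⬝ᵥ K.mulVec α) + (β - α) ⬝ᵥ K.mulVec (β - α) := by
      have hβ : β = α + (β - α) := by ring
      calc β ⬝ᵥ K.mulVec β
          = (α + (β - α)) ⬝ᵥ K.mulVec (α + (β - α)) := by rw [← hβ]
        _ = α ⬝ᵥ K.mulVec α + α ⬝ᵥ K.mulVec (β - α)
            + ((β - α) ⬝ᵥ K.mulVec α + (β - α) ⬝ᵥ K.mulVec (β - α)) := by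
            rw [mulVec_add, add_dotProduct, dotProduct_add, dotProduct_add]
        _ = _ := by rw [hsymm α (β - α)]; ring
    rw [hF]
    simp only
    rw [Finset.sum_congr rfl fun i _ => hterm i]
    rw [Finset.sum_sub_distrib, Finset.sum_add_distrib, ← Finset.mul_sum, hcross, hquad]
    ring
  refine ⟨hdet, ?_, ?_⟩
  · intro β
    rw [key β]
    have h1 : 0 ≤ ∑ i, w i * ((C * K).mulVec (β - α) i) ^ 2 :=
      Finset.sum_nonneg fun i _ => mul_nonneg (hw i).le (sq_nonneg _)
    have h2 : 0 ≤ (β - α) ⬝ᵥ K.mulVec (β - α) := by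
      have := hK.dotProduct_mulVec_nonneg (β - α)
      simpa using this
    nlinarith
  · intro β hβ
    rw [key β] at hβ
    have h1 : 0 ≤ ∑ i, w i * ((C * K).mulVec (β - α) i) ^ 2 :=
      Finset.sum_nonneg fun i _ => mul_nonneg (hw i).le (sq_nonneg _)
    have h2 : 0 ≤ (β - α) ⬝ᵥ K.mulVec (β - α) := by
      have := hK.dotProduct_mulVec_nonneg (β - α)
      simpa using this
    have h3 : (β - α) ⬝ᵥ K.mulVec (β - α) = 0 := by nlinarith
    have h4 : K.mulVec (β - α) = 0 := by
      have := (hK.dotProduct_mulVec_zero_iff (β - α)).mp (by simpa using h3)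
      exact this
    have h5 : K.mulVec β - K.mulVec α = 0 := by rw [← mulVec_sub, h4]
    exact sub_eq_zero.mp h5
end
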